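/- arXiv:2110.08354 — 8 statements merged into one kernel-verified Lean document; each statement's English description precedes it below -/
import Mathlib

section
/- Let K be a field, f ∈ K[x] of degree n ≥ 1, a ∈ K[x] of degree < n, and let R ∈ K[y]^{m×m} be a matrix of relations of R_m^{(a,f)} all of whose entries have degree at most d. Then det R is a nonzero polynomial in K[y] of degree at most m·d, and f divides (det R)(a(x)) in K[x]; that is, det R is an annihilating polynomial for a modulo f. -/
/-! By Cramer's rule `R · cramer(R, e₀) = det R · e₀`, so `(det R, 0, …, 0)` is a
`K[y]`-combination of the columns of `R`. Relations are closed under such combinations because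
substituting `y = a(x)` is a ring homomorphism, and evaluating this one at `y = a(x)` gives
`f ∣ (det R)(a)`. The degree bound is read off the Leibniz formula. -/

open Polynomial Matrix

noncomputable section

variable {K : Type*} [Field K]

/-- Matrix of multiplication by `a` modulo `f` in the basis `1, x, ..., x^(n-1)`:
its `k`-th column is the coefficient vector of `(x^k * a) mod f`. -/
def mulMat (f a : K[X]) (n : ℕ) : Matrix (Fin n) (Fin n) K :=
  fun i k => ((X ^ (k : ℕ) * a) % f).coeff (i : ℕ)

/-- `r(x, a(x))` where `r` is the bivariate polynomial with coefficient vector `v`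
(under the coefficient-vector identification `r = v 0 + (v 1) x + ⋯ + (v (m-1)) x^(m-1)`). -/
def relEval (a : K[X]) {m : ℕ} (v : Fin m → K[X]) : K[X] :=
  ∑ i : Fin m, X ^ (i : ℕ) * ((v i).comp a)

/-- `v` represents an element of the module of relations `R_m^{(a,f)}`. -/
def IsRelation (f a : K[X]) {m : ℕ} (v : Fin m → K[X]) : Prop :=
  f ∣ relEval a v

/-- Matrix of relations of `R_m^{(a,f)}`: nonsingular, all columns are relations. -/
def IsRelMat (f a : K[X]) {m : ℕ} (R : Matrix (Fin m) (Fin m) K[X]) : Prop :=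
  R.det ≠ 0 ∧ ∀ j, IsRelation f a (fun i => R i j)

/-- Basis of relations of `R_m^{(a,f)}`: matrix of relations whose columns generate
the module of relations. -/
def IsRelBasis (f a : K[X]) {m : ℕ} (R : Matrix (Fin m) (Fin m) K[X]) : Prop :=
  IsRelMat f a R ∧ ∀ v : Fin m → K[X], IsRelation f a v →
    v ∈ Submodule.span K[X] (Set.range fun j => fun i => R i j)

theorem Matrix.natDegree_det_le {R n : Type*} [CommRing R] [Fintype n] [DecidableEq n]
    (A : Matrix n n R[X]) {d : ℕ} (hA : ∀ i j, (A i j).natDegree ≤ d) :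
    A.det.natDegree ≤ Fintype.card n * d := by
  rw [det_apply]
  refine natDegree_sum_le_of_forall_le _ _ fun σ _ => (natDegree_smul_le _ _).trans ?_
  refine (natDegree_prod_le _ _).trans ?_
  simpa using Finset.sum_le_sum fun i (_ : i ∈ Finset.univ) => hA (σ i) i

theorem relEval_mulVec {m : ℕ} {ι : Type*} [Fintype ι] (a : K[X]) (M : Matrix (Fin m) ι K[X])
    (w : ι → K[X]) :
    relEval a (M *ᵥ w) = ∑ j, (w j).comp a * relEval a (fun i => M i j) := by
  simp only [relEval, mulVec, dotProduct, sum_comp, mul_comp, Finset.mul_sum]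
  rw [Finset.sum_comm]
  refine Finset.sum_congr rfl fun j _ => Finset.sum_congr rfl fun i _ => ?_
  ring

theorem relEval_single {m : ℕ} (a : K[X]) (z : Fin m) (p : K[X]) :
    relEval a (Pi.single z p) = X ^ (z : ℕ) * p.comp a := by
  rw [relEval, Finset.sum_eq_single z (fun i _ hi => by simp [hi]) (by simp)]
  simp

theorem IsRelation.mulVec {m : ℕ} {ι : Type*} [Fintype ι] {f a : K[X]}
    {M : Matrix (Fin m) ι K[X]} (hM : ∀ j, IsRelation f a (fun i => M i j)) (w : ι → K[X]) :
    IsRelation f a (M *ᵥ w) := by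
  rw [IsRelation, relEval_mulVec]
  exact Finset.dvd_sum fun j _ => (hM j).mul_left _

theorem det_relMat_annihilates_general
    (m d : ℕ) (hm : 1 ≤ m) (f a : K[X])
    (R : Matrix (Fin m) (Fin m) K[X]) (hR : IsRelMat f a R)
    (hdeg : ∀ i j, (R i j).degree ≤ (d : WithBot ℕ)) :
    R.det ≠ 0 ∧ R.det.natDegree ≤ m * d ∧ f ∣ R.det.comp a := by
  obtain ⟨hdet, hcols⟩ := hR
  refine ⟨hdet, ?_, ?_⟩
  · simpa using R.natDegree_det_le fun i j => natDegree_le_iff_degree_le.2 (hdeg i j)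
  · let z : Fin m := ⟨0, hm⟩
    have hrel : IsRelation f a (Pi.single z R.det) := by
      simpa [mulVec_cramer, ← Pi.single_smul] using
        IsRelation.mulVec hcols (cramer R (Pi.single z 1))
    simpa [IsRelation, relEval_single, z] using hrel

/-- the determinant of a matrix of relations of `R_m^{(a,f)}` of degree at most `d`
is a nonzero annihilating polynomial for `a` modulo `f`, of degree at most `m·d`. -/
theorem det_relMat_annihilates
    (n m d : ℕ) (hn : 1 ≤ n) (hm : 1 ≤ m) (f a : K[X]) (hf : f.natDegree = n)
    (ha : a.degree < (n : WithBot ℕ))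
    (R : Matrix (Fin m) (Fin m) K[X]) (hR : IsRelMat f a R)
    (hdeg : ∀ i j, (R i j).degree ≤ (d : WithBot ℕ)) :
    R.det ≠ 0 ∧ R.det.natDegree ≤ m * d ∧ f ∣ R.det.comp a :=
  det_relMat_annihilates_general m d hm f a R hR hdeg
end
end

section
/- Let K be a field, f ∈ K[x] of degree n ≥ 1, a ∈ K[x] of degree < n, and ℓ, m ∈ {1, …, n}. Under the coefficient-vector identification, R_{ℓ,m}^{(a,f)} = denom( (I_ℓ 0)·(y·I_n − M_a)^{−1}·X ), where (I_ℓ 0)·(y·I_n − M_a)^{−1}·X ∈ K(y)^{ℓ×m} and the inverse is taken over the field K(y) of rational functions (y·I_n − M_a is invertible over K(y) since its determinant is the characteristic polynomial of M_a). -/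
open Polynomial Matrix

noncomputable section

variable {K : Type*} [Field K]

/-- `v` represents an element of the truncated module of relations `R_{ℓ,m}^{(a,f)}`:
for every `k ≥ 0`, the coefficients of `x^0, …, x^(ℓ-1)` of `(a^k · r(x,a(x))) mod f` vanish. -/
def IsTruncRelation (f a : K[X]) (ℓ : ℕ) {m : ℕ} (v : Fin m → K[X]) : Prop :=
  ∀ (k j : ℕ), j < ℓ → ((a ^ k * relEval a v) % f).coeff j = 0

/-- The `n×m` matrix `X` whose top `m×m` block is the identity, over any `α`. -/
def Xup (α : Type*) [Zero α] [One α] (n m : ℕ) : Matrix (Fin n) (Fin m) α :=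
  fun i j => if (i : ℕ) = (j : ℕ) then 1 else 0

/-- The `ℓ×n` matrix `(I_ℓ 0)` whose left `ℓ×ℓ` block is the identity, over any `α`. -/
def projL (α : Type*) [Zero α] [One α] (ℓ n : ℕ) : Matrix (Fin ℓ) (Fin n) α :=
  fun i j => if (i : ℕ) = (j : ℕ) then 1 else 0

/-- The rational matrix `(I_ℓ 0) · (y I_n − M_a)⁻¹ · X ∈ K(y)^{ℓ×m}`. -/
def fracMat (f a : K[X]) (n ℓ m : ℕ) : Matrix (Fin ℓ) (Fin m) (RatFunc K) :=
  projL (RatFunc K) ℓ n *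
    ((charmatrix (mulMat f a n)).map (algebraMap K[X] (RatFunc K)))⁻¹ *
    Xup (RatFunc K) n m

/-- `v ∈ denom(F)`: every entry of `F·v` is a polynomial. -/
def memDenom {ℓ m : ℕ} (F : Matrix (Fin ℓ) (Fin m) (RatFunc K)) (v : Fin m → K[X]) : Prop :=
  ∀ i, ∃ p : K[X],
    F.mulVec (fun j => algebraMap K[X] (RatFunc K) (v j)) i = algebraMap K[X] (RatFunc K) p

/-!
Let `u` be the coefficient vector of `r(x, a(x)) mod f`. Since `M_a^k u` is the coefficient vector
of `a^k r(x, a(x)) mod f`, `r` is a truncated relation iff the first `ℓ` entries of every Krylov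
vector `M_a^k u` vanish. On the other side, `y` acts as `M_a` modulo the columns of `y I - M_a`, so
`X r ≡ u` there and `(y I - M_a)⁻¹ X r` differs from `(y I - M_a)⁻¹ u` by a polynomial vector. The
entries of `(y I - M_a)⁻¹ u` are strictly proper (valuation at infinity `< 1`), so adding a
polynomial gives a polynomial iff they vanish. Finally
`y (y I - M)⁻¹ M^k u = M^k u + (y I - M)⁻¹ M^(k+1) u` shows that an entry of `(y I - M)⁻¹ u`
vanishes iff the same entry of every `M^k u` does.
-/

section InftyValuation

open WithZero

variable [DecidableEq (RatFunc K)]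

local notation "v∞" => RatFunc.inftyValuation K

theorem eq_zero_of_inftyValuation_algebraMap_lt_one {p : K[X]}
    (hp : v∞ (algebraMap K[X] (RatFunc K) p) < 1) : p = 0 := by
  by_contra h
  rw [RatFunc.inftyValuation_apply, RatFunc.inftyValuation.polynomial K h, ← exp_zero,
    exp_lt_exp] at hp
  omega

theorem eq_zero_of_forall_inftyValuation_X_pow_mul_lt_one {g : RatFunc K}
    (h : ∀ k : ℕ, v∞ (RatFunc.X ^ k * g) < 1) : g = 0 := by
  by_contra hg
  obtain ⟨d, hd⟩ : ∃ d, v∞ g = exp d := ⟨_, (exp_log (by simpa using hg)).symm⟩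
  have := h d.natAbs
  rw [map_mul, map_pow, RatFunc.inftyValuation.X, hd, ← WithZero.exp_nsmul, ← exp_add,
    ← exp_zero, exp_lt_exp, nsmul_one] at this
  omega

/-- At an entry of maximal valuation `≥ 1`, the left side gains the factor `v∞ X > 1` while the
right side does not grow. -/
theorem inftyValuation_lt_one_of_X_smul_eq {ι : Type*} [Fintype ι] (M : Matrix ι ι K)
    (z : ι → K) (u : ι → RatFunc K)
    (h : (RatFunc.X : RatFunc K) • u = M.map (algebraMap K _) *ᵥ u + algebraMap K _ ∘ z)
    (i : ι) : v∞ (u i) < 1 := by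
  by_contra! hi
  obtain ⟨j, -, hj⟩ :=
    Finset.exists_max_image Finset.univ (fun j => v∞ (u j)) ⟨i, Finset.mem_univ _⟩
  have hj1 : 1 ≤ v∞ (u j) := hi.trans (hj i (Finset.mem_univ _))
  have hbound : exp 1 * v∞ (u j) ≤ v∞ (u j) :=
    calc exp 1 * v∞ (u j) = v∞ ((M.map (algebraMap K _) *ᵥ u) j + algebraMap K _ (z j)) := by
          rw [← RatFunc.inftyValuation.X K, ← map_mul, ← smul_eq_mul, ← Pi.smul_apply, h]
          rfl
      _ ≤ v∞ (u j) := by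
        simp only [Matrix.mulVec, dotProduct, Matrix.map_apply]
        refine (Valuation.map_add _ _ _).trans (max_le ?_ ?_)
        · refine Valuation.map_sum_le _ fun k _ => ?_
          rw [map_mul]
          exact mul_le_of_le_one_of_le (Valuation.IsTrivialOn.valuation_algebraMap_le_one _ _)
            (hj k (Finset.mem_univ _))
        · exact (Valuation.IsTrivialOn.valuation_algebraMap_le_one _ _).trans hj1
  obtain ⟨e, he⟩ : ∃ e, v∞ (u j) = exp e :=
    ⟨_, (exp_log (ne_of_gt (zero_lt_one.trans_le hj1))).symm⟩
  rw [he, ← exp_add, exp_le_exp] at hbound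
  omega

end InftyValuation

theorem RingHom.comp_mulVec {R S m n : Type*} [Fintype n] [NonAssocSemiring R]
    [NonAssocSemiring S] (f : R →+* S) (A : Matrix m n R) (v : n → R) :
    f ∘ (A *ᵥ v) = A.map f *ᵥ (f ∘ v) :=
  funext (f.map_mulVec A v)

section Charmatrix

variable {R ι : Type*} [CommRing R] [Fintype ι] [DecidableEq ι]

theorem Matrix.scalar_mulVec (c : R) (x : ι → R) : scalar ι c *ᵥ x = c • x := by
  funext i
  rw [scalar_apply, mulVec_diagonal]
  rfl

theorem charmatrix_dvd_scalar_sub_aeval (M : Matrix ι ι R) (s : R[X]) :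
    charmatrix M ∣ scalar ι s - (C : R →+* R[X]).mapMatrix (aeval M s) := by
  have hcentral : ∀ (p : R[X]) (A : Matrix ι ι R[X]), Commute (scalar ι p) A :=
    fun _ _ => scalar_commute _ (fun _ => Commute.all _ _) _
  induction s using Polynomial.induction_on' with
  | add p q hp hq =>
    convert dvd_add hp hq using 1
    simp only [map_add]
    abel
  | monomial k c =>
    have hc : (C : R →+* R[X]).mapMatrix (algebraMap R (Matrix ι ι R) c) = scalar ι (C c) := by
      ext i j
      simp [algebraMap_matrix_apply, scalar_apply, diagonal_apply, apply_ite C]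
    have hmon : scalar ι (monomial k c) - (C : R →+* R[X]).mapMatrix (aeval M (monomial k c)) =
        (scalar ι X ^ k - (C : R →+* R[X]).mapMatrix M ^ k) * scalar ι (C c) := by
      rw [aeval_monomial, map_mul, map_pow, hc, ← C_mul_X_pow_eq_monomial, map_mul, map_pow,
        sub_mul, (hcentral _ _).eq, (hcentral _ _).eq]
    rw [charmatrix, hmon]
    exact ((hcentral _ _).sub_dvd_pow_sub_pow k).mul_right _

theorem exists_charmatrix_mulVec_add_eq_smul (M : Matrix ι ι R) (s : R[X]) (w : ι → R) :
    ∃ q, charmatrix M *ᵥ q + C ∘ (aeval M s *ᵥ w) = s • (C ∘ w) := by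
  obtain ⟨Q, hQ⟩ := charmatrix_dvd_scalar_sub_aeval M s
  refine ⟨Q *ᵥ (C ∘ w), ?_⟩
  rw [mulVec_mulVec, ← hQ, sub_mulVec, scalar_mulVec, RingHom.comp_mulVec,
    RingHom.mapMatrix_apply, sub_add_cancel]

theorem exists_charmatrix_mulVec_add_eq_map_mulVec {κ : Type*} [Fintype κ] (M : Matrix ι ι R)
    (W : Matrix ι κ R) (v : κ → R[X]) :
    ∃ q, charmatrix M *ᵥ q + C ∘ ∑ j, aeval M (v j) *ᵥ (fun i => W i j) = W.map C *ᵥ v := by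
  choose q hq using fun j => exists_charmatrix_mulVec_add_eq_smul M (v j) (fun i => W i j)
  refine ⟨∑ j, q j, ?_⟩
  have hW : W.map C *ᵥ v = ∑ j, v j • (C ∘ fun i => W i j) := by
    funext i
    simp [mulVec, dotProduct, Finset.sum_apply, mul_comm]
  have hC : C ∘ ∑ j, aeval M (v j) *ᵥ (fun i => W i j) =
      ∑ j, C ∘ (aeval M (v j) *ᵥ fun i => W i j) := by
    funext i
    simp [Finset.sum_apply]
  rw [hW, hC, mulVec_sum, ← Finset.sum_add_distrib]
  exact Finset.sum_congr rfl fun j _ => hq j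

end Charmatrix

section CharmatrixInv

variable {ι : Type*} [Fintype ι] [DecidableEq ι]

def charmatrixInv (M : Matrix ι ι K) : Matrix ι ι (RatFunc K) :=
  ((charmatrix M).map (algebraMap K[X] (RatFunc K)))⁻¹

variable (M : Matrix ι ι K)

theorem charmatrix_map_algebraMap :
    (charmatrix M).map (algebraMap K[X] (RatFunc K)) =
      scalar ι RatFunc.X - M.map (algebraMap K (RatFunc K)) := by
  ext i j
  by_cases h : i = j
  · subst h
    simp [RatFunc.algebraMap_X, RatFunc.algebraMap_C, RatFunc.algebraMap_eq_C]
  · simp [h, RatFunc.algebraMap_C, RatFunc.algebraMap_eq_C]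

theorem isUnit_det_charmatrix_map_algebraMap :
    IsUnit ((charmatrix M).map (algebraMap K[X] (RatFunc K))).det := by
  rw [← RingHom.mapMatrix_apply, ← RingHom.map_det, isUnit_iff_ne_zero,
    map_ne_zero_iff _ (RatFunc.algebraMap_injective K)]
  exact (charpoly_monic M).ne_zero

theorem charmatrixInv_mulVec_charmatrix_mulVec_add (q : ι → K[X]) (z : ι → K) :
    charmatrixInv M *ᵥ (algebraMap K[X] (RatFunc K) ∘ (charmatrix M *ᵥ q + C ∘ z)) =
      algebraMap K[X] (RatFunc K) ∘ q + charmatrixInv M *ᵥ (algebraMap K (RatFunc K) ∘ z) := by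
  have hC : algebraMap K[X] (RatFunc K) ∘ (C ∘ z) = algebraMap K (RatFunc K) ∘ z :=
    funext fun i => (IsScalarTower.algebraMap_apply K K[X] (RatFunc K) (z i)).symm
  have hadd : algebraMap K[X] (RatFunc K) ∘ (charmatrix M *ᵥ q + C ∘ z) =
      algebraMap K[X] (RatFunc K) ∘ (charmatrix M *ᵥ q) + algebraMap K[X] (RatFunc K) ∘ (C ∘ z) :=
    funext fun i => map_add _ _ _
  rw [hadd, hC, mulVec_add, RingHom.comp_mulVec, mulVec_mulVec, charmatrixInv,
    nonsing_inv_mul _ (isUnit_det_charmatrix_map_algebraMap M), one_mulVec]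

theorem X_smul_charmatrixInv_mulVec (x : ι → RatFunc K) :
    (RatFunc.X : RatFunc K) • (charmatrixInv M *ᵥ x) =
      x + charmatrixInv M *ᵥ (M.map (algebraMap K (RatFunc K)) *ᵥ x) := by
  have h : charmatrixInv M * (scalar ι RatFunc.X - M.map (algebraMap K (RatFunc K))) = 1 := by
    rw [← charmatrix_map_algebraMap]
    exact nonsing_inv_mul _ (isUnit_det_charmatrix_map_algebraMap M)
  rw [mul_sub, sub_eq_iff_eq_add] at h
  rw [← mulVec_smul, ← scalar_mulVec, mulVec_mulVec, h, add_mulVec, one_mulVec, mulVec_mulVec]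

theorem X_smul_charmatrixInv_mulVec' (x : ι → RatFunc K) :
    (RatFunc.X : RatFunc K) • (charmatrixInv M *ᵥ x) =
      M.map (algebraMap K (RatFunc K)) *ᵥ (charmatrixInv M *ᵥ x) + x := by
  have h : (scalar ι RatFunc.X - M.map (algebraMap K (RatFunc K))) * charmatrixInv M = 1 := by
    rw [← charmatrix_map_algebraMap]
    exact mul_nonsing_inv _ (isUnit_det_charmatrix_map_algebraMap M)
  rw [sub_mul, sub_eq_iff_eq_add'] at h
  rw [← scalar_mulVec, mulVec_mulVec, h, add_mulVec, one_mulVec, mulVec_mulVec]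

theorem inftyValuation_charmatrixInv_mulVec_lt_one [DecidableEq (RatFunc K)] (z : ι → K)
    (i : ι) :
    RatFunc.inftyValuation K ((charmatrixInv M *ᵥ (algebraMap K (RatFunc K) ∘ z)) i) < 1 :=
  inftyValuation_lt_one_of_X_smul_eq M z _ (X_smul_charmatrixInv_mulVec' M _) i

theorem exists_algebraMap_eq_add_charmatrixInv_mulVec_apply_iff (p : K[X]) (z : ι → K) (i : ι) :
    (∃ r : K[X], algebraMap K[X] (RatFunc K) p +
        (charmatrixInv M *ᵥ (algebraMap K (RatFunc K) ∘ z)) i = algebraMap K[X] (RatFunc K) r) ↔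
      (charmatrixInv M *ᵥ (algebraMap K (RatFunc K) ∘ z)) i = 0 := by
  classical
  refine ⟨fun ⟨r, hr⟩ => ?_, fun h => ⟨p, by rw [h, add_zero]⟩⟩
  have hsub : (charmatrixInv M *ᵥ (algebraMap K (RatFunc K) ∘ z)) i =
      algebraMap K[X] (RatFunc K) (r - p) := by
    rw [map_sub, ← hr, add_sub_cancel_left]
  have hlt := inftyValuation_charmatrixInv_mulVec_lt_one M z i
  rw [hsub] at hlt ⊢
  rw [eq_zero_of_inftyValuation_algebraMap_lt_one hlt, map_zero]

theorem charmatrixInv_mulVec_apply_eq_zero_iff (w : ι → K) (i : ι) :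
    (charmatrixInv M *ᵥ (algebraMap K (RatFunc K) ∘ w)) i = 0 ↔ ∀ k, (M ^ k *ᵥ w) i = 0 := by
  classical
  set u : ℕ → RatFunc K :=
    fun k => (charmatrixInv M *ᵥ (algebraMap K (RatFunc K) ∘ (M ^ k *ᵥ w))) i
  have hu : ∀ k, RatFunc.X * u k = algebraMap K (RatFunc K) ((M ^ k *ᵥ w) i) + u (k + 1) := by
    intro k
    have h := congrFun (X_smul_charmatrixInv_mulVec M (algebraMap K (RatFunc K) ∘ (M ^ k *ᵥ w))) i
    rwa [← RingHom.comp_mulVec, mulVec_mulVec, ← pow_succ'] at h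
  have hlt : ∀ k, RatFunc.inftyValuation K (u k) < 1 := fun k =>
    inftyValuation_charmatrixInv_mulVec_lt_one M _ i
  constructor
  · intro h0
    have hstep : ∀ k, u k = 0 → (M ^ k *ᵥ w) i = 0 ∧ u (k + 1) = 0 := by
      intro k hk
      have hc := hu k
      rw [hk, mul_zero, eq_comm, add_eq_zero_iff_eq_neg] at hc
      have hc0 : (M ^ k *ᵥ w) i = 0 := by
        by_contra hne
        have hv := Valuation.IsTrivialOn.eq_one (v := RatFunc.inftyValuation K) _ hne
        rw [hc, Valuation.map_neg] at hv
        exact (hlt (k + 1)).ne hv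
      rw [hc0, map_zero, zero_eq_neg] at hc
      exact ⟨hc0, hc⟩
    have hzero : ∀ k, u k = 0 := by
      intro k
      induction k with
      | zero => simpa [u] using h0
      | succ k ih => exact (hstep k ih).2
    exact fun k => (hstep k (hzero k)).1
  · intro h
    have hpow : ∀ k, u k = RatFunc.X ^ k * u 0 := by
      intro k
      induction k with
      | zero => rw [pow_zero, one_mul]
      | succ k ih => rw [pow_succ', mul_assoc, ← ih, hu, h, map_zero, zero_add]
    have hu0 : u 0 = (charmatrixInv M *ᵥ (algebraMap K (RatFunc K) ∘ w)) i := by simp [u]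
    rw [← hu0]
    exact eq_zero_of_forall_inftyValuation_X_pow_mul_lt_one fun k => hpow k ▸ hlt k

end CharmatrixInv

theorem Xup_map {α β : Type*} [NonAssocSemiring α] [NonAssocSemiring β] (f : α →+* β)
    (n m : ℕ) : (Xup α n m).map f = Xup β n m := by
  ext i j
  simp [Xup, apply_ite f]

theorem projL_mulVec_apply {α : Type*} [NonAssocSemiring α] {ℓ n : ℕ} (h : ℓ ≤ n)
    (w : Fin n → α) (i : Fin ℓ) : (projL α ℓ n *ᵥ w) i = w (Fin.castLE h i) := by
  rw [mulVec, dotProduct, Finset.sum_eq_single (Fin.castLE h i)]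
  · simp [projL]
  · intro j _ hj
    rw [projL, if_neg fun hij => hj (Fin.ext hij.symm), zero_mul]
  · simp

def remCoeffs (f : K[X]) (n : ℕ) (p : K[X]) : Fin n → K :=
  fun i => (p % f).coeff i

section MulMat

variable {f : K[X]} {n : ℕ}

local notation "f₁" => f * C f.leadingCoeff⁻¹

/-- `p % f` is by definition `p %ₘ f₁` for the monic associate `f₁` of `f`, so the power basis of
`K[X] ⧸ (f₁)` has the coordinates `remCoeffs f n`. -/
def modBasis (hf : f ≠ 0) (hn : f.natDegree = n) : Module.Basis (Fin n) K (AdjoinRoot f₁) :=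
  (AdjoinRoot.powerBasisAux' (monic_mul_leadingCoeff_inv hf)).reindex
    (finCongr ((natDegree_mul_leadingCoeff_inv f hf).trans hn))

theorem modBasis_repr_mk (hf : f ≠ 0) (hn : f.natDegree = n) (p : K[X]) :
    ⇑((modBasis hf hn).repr (AdjoinRoot.mk f₁ p)) = remCoeffs f n p := by
  funext i
  rw [modBasis, Module.Basis.repr_reindex_apply, AdjoinRoot.powerBasisAux'_repr_apply_to_fun,
    AdjoinRoot.modByMonicHom_mk]
  rfl

theorem modBasis_apply (hf : f ≠ 0) (hn : f.natDegree = n) (i : Fin n) :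
    modBasis hf hn i = AdjoinRoot.mk f₁ (X ^ (i : ℕ)) := by
  rw [modBasis, Module.Basis.reindex_apply, map_pow, AdjoinRoot.mk_X]
  exact (AdjoinRoot.powerBasis' (monic_mul_leadingCoeff_inv hf)).basis_eq_pow _

theorem mulMat_eq_leftMulMatrix (hf : f ≠ 0) (hn : f.natDegree = n) (a : K[X]) :
    mulMat f a n = Algebra.leftMulMatrix (modBasis hf hn) (AdjoinRoot.mk f₁ a) := by
  ext i k
  rw [Algebra.leftMulMatrix_eq_repr_mul, modBasis_apply, ← map_mul, modBasis_repr_mk, mulMat,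
    remCoeffs, mul_comm]

theorem aeval_mulMat_mulVec_remCoeffs (hf : f ≠ 0) (hn : f.natDegree = n) (a s p : K[X]) :
    aeval (mulMat f a n) s *ᵥ remCoeffs f n p = remCoeffs f n (s.comp a * p) := by
  have hcomp : aeval (AdjoinRoot.mk f₁ a) s = AdjoinRoot.mk f₁ (s.comp a) :=
    aeval_algHom_apply (AdjoinRoot.mkₐ f₁) a s
  rw [mulMat_eq_leftMulMatrix hf hn, aeval_algHom_apply, hcomp, ← modBasis_repr_mk hf hn,
    Algebra.leftMulMatrix_mulVec_repr, ← map_mul, modBasis_repr_mk]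

theorem remCoeffs_X_pow (hf : f ≠ 0) (hn : f.natDegree = n) {j : ℕ} (hj : j < n) :
    remCoeffs f n (X ^ j) = fun i : Fin n => if (i : ℕ) = j then (1 : K) else 0 := by
  funext i
  rw [remCoeffs, (mod_eq_self_iff hf).mpr, coeff_X_pow]
  rw [degree_X_pow, degree_eq_natDegree hf, hn]
  exact_mod_cast hj

theorem remCoeffs_relEval (hf : f ≠ 0) (hn : f.natDegree = n) {m : ℕ} (a : K[X])
    (v : Fin m → K[X]) :
    remCoeffs f n (relEval a v) =
      ∑ j, aeval (mulMat f a n) (v j) *ᵥ remCoeffs f n (X ^ (j : ℕ)) := by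
  simp only [aeval_mulMat_mulVec_remCoeffs hf hn]
  simp only [← modBasis_repr_mk hf hn, relEval, map_sum, Finsupp.coe_finsetSum, mul_comm]

theorem exists_charmatrix_mulVec_add_remCoeffs_relEval (hf : f ≠ 0) (hn : f.natDegree = n)
    {m : ℕ} (hmn : m ≤ n) (a : K[X]) (v : Fin m → K[X]) :
    ∃ q, charmatrix (mulMat f a n) *ᵥ q + C ∘ remCoeffs f n (relEval a v) =
      Xup K[X] n m *ᵥ v := by
  have hcol : ∀ j : Fin m, remCoeffs f n (X ^ (j : ℕ)) = fun i => Xup K n m i j := fun j => by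
    rw [remCoeffs_X_pow hf hn (j.2.trans_le hmn)]
    rfl
  simp only [remCoeffs_relEval hf hn, hcol, ← Xup_map C]
  exact exists_charmatrix_mulVec_add_eq_map_mulVec _ _ v

theorem isTruncRelation_iff (hf : f ≠ 0) (hn : f.natDegree = n) {ℓ m : ℕ} (hln : ℓ ≤ n)
    (a : K[X]) (v : Fin m → K[X]) :
    IsTruncRelation f a ℓ v ↔ ∀ i : Fin ℓ, ∀ k,
      (mulMat f a n ^ k *ᵥ remCoeffs f n (relEval a v)) (Fin.castLE hln i) = 0 := by
  have hpow : ∀ k, mulMat f a n ^ k *ᵥ remCoeffs f n (relEval a v) =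
      remCoeffs f n (a ^ k * relEval a v) := fun k => by
    simpa using aeval_mulMat_mulVec_remCoeffs hf hn a (X ^ k) (relEval a v)
  simp only [hpow, remCoeffs, Fin.val_castLE]
  exact ⟨fun h i k => h k i i.2, fun h k j hj => h ⟨j, hj⟩ k⟩

end MulMat

theorem memDenom_fracMat_iff {n ℓ m : ℕ} (hln : ℓ ≤ n) {f a : K[X]} {v : Fin m → K[X]}
    {q : Fin n → K[X]} {u : Fin n → K}
    (hq : charmatrix (mulMat f a n) *ᵥ q + C ∘ u = Xup K[X] n m *ᵥ v) :
    memDenom (fracMat f a n ℓ m) v ↔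
      ∀ i : Fin ℓ, (charmatrixInv (mulMat f a n) *ᵥ (algebraMap K (RatFunc K) ∘ u))
        (Fin.castLE hln i) = 0 := by
  have hfrac : (fracMat f a n ℓ m *ᵥ fun j => algebraMap K[X] (RatFunc K) (v j)) =
      projL _ ℓ n *ᵥ (algebraMap K[X] (RatFunc K) ∘ q +
        charmatrixInv (mulMat f a n) *ᵥ (algebraMap K (RatFunc K) ∘ u)) := by
    rw [← Function.comp_def, fracMat, ← mulVec_mulVec, ← mulVec_mulVec,
      ← Xup_map (algebraMap K[X] (RatFunc K)), ← RingHom.comp_mulVec, ← hq]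
    exact congrArg _ (charmatrixInv_mulVec_charmatrix_mulVec_add _ q u)
  refine forall_congr' fun i => ?_
  rw [hfrac, projL_mulVec_apply hln, Pi.add_apply]
  exact exists_algebraMap_eq_add_charmatrixInv_mulVec_apply_iff _ _ u _

theorem truncRelations_eq_denom_general
    (n ℓ m : ℕ) (hn : 1 ≤ n) (hln : ℓ ≤ n) (hmn : m ≤ n)
    (f a : K[X]) (hf : f.natDegree = n) :
    ∀ v : Fin m → K[X], IsTruncRelation f a ℓ v ↔ memDenom (fracMat f a n ℓ m) v := by
  intro v
  have hf0 : f ≠ 0 := ne_zero_of_natDegree_gt (hf ▸ hn : 0 < f.natDegree)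
  obtain ⟨q, hq⟩ := exists_charmatrix_mulVec_add_remCoeffs_relEval hf0 hf hmn a v
  rw [isTruncRelation_iff hf0 hf hln, memDenom_fracMat_iff hln hq]
  exact forall_congr' fun i => (charmatrixInv_mulVec_apply_eq_zero_iff _ _ _).symm

/-- `R_{ℓ,m}^{(a,f)} = denom((I_ℓ 0)·(y I_n − M_a)⁻¹·X)`. -/
theorem truncRelations_eq_denom
    (n ℓ m : ℕ) (hn : 1 ≤ n) (hl : 1 ≤ ℓ) (hln : ℓ ≤ n) (hm : 1 ≤ m) (hmn : m ≤ n)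
    (f a : K[X]) (hf : f.natDegree = n) (ha : a.degree < (n : WithBot ℕ)) :
    ∀ v : Fin m → K[X], IsTruncRelation f a ℓ v ↔ memDenom (fracMat f a n ℓ m) v :=
  truncRelations_eq_denom_general n ℓ m hn hln hmn f a hf
end
end

section
/- Let K be a field, f ∈ K[x] of degree n with f(0) ≠ 0, and let a ∈ K[x] be monic of degree m with 1 ≤ m < n. For 0 ≤ i ≤ m−1, set p_i = [ (a·x^{n−m+i}) mod f ]_0^{m−1} ∈ K[x]. (i) If 2m ≤ n, then the m polynomials p_0, …, p_{m−1} are linearly independent over K. (ii) If n < 2m, then the n−m polynomials p_{2m−n}, …, p_{m−1} are linearly independent over K. -/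
/-!
A vanishing combination `∑ cᵢ [(a X^(t+i)) mod f]_0^{m-1}`, `i < k`, means that `X ^ m` divides
`(a X^t h) mod f`, where `h = ∑ cᵢ Xⁱ` has degree `< k`. As `X ^ m` also divides `a X^t h` and
`X ∤ f`, it divides the quotient `(a X^t h) / f`, whose degree is `< m`; so the quotient vanishes
and `a X^t h`, of degree `≥ m + t ≥ n = deg f` unless `h = 0`, would be its own remainder.
-/

open Polynomial

noncomputable section

variable {K : Type*} [Field K]

/-- Truncation `[p]_0^{m-1} = p_0 + p_1 x + ⋯ + p_{m-1} x^{m-1}` of a polynomial. -/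
def truncPoly (m : ℕ) (p : K[X]) : K[X] :=
  ∑ j ∈ Finset.range m, C (p.coeff j) * X ^ j

lemma coeff_truncPoly_of_lt {m j : ℕ} (p : K[X]) (hj : j < m) :
    (truncPoly m p).coeff j = p.coeff j := by
  simp [truncPoly, coeff_C_mul, coeff_X_pow, hj]

lemma X_pow_dvd_of_truncPoly_eq_zero {m : ℕ} {p : K[X]} (h : truncPoly m p = 0) : X ^ m ∣ p :=
  X_pow_dvd_iff.mpr fun d hd => by rw [← coeff_truncPoly_of_lt p hd, h, coeff_zero]

@[simps]
def truncPolyₗ (m : ℕ) : K[X] →ₗ[K] K[X] where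
  toFun := truncPoly m
  map_add' p q := by simp [truncPoly, add_mul, Finset.sum_add_distrib]
  map_smul' c p := by simp [truncPoly, Finset.smul_sum, smul_eq_C_mul, mul_assoc]

@[simps]
def modₗ (f : K[X]) : K[X] →ₗ[K] K[X] where
  toFun p := p % f
  map_add' p q := add_mod p q f
  map_smul' c p := by simp [mod_def, smul_modByMonic]

lemma degree_lt_of_X_pow_dvd_mod {f g : K[X]} {m : ℕ} (hXf : ¬ X ∣ f) (hg : X ^ m ∣ g)
    (hgf : X ^ m ∣ g % f) (hdeg : g.natDegree < f.natDegree + m) : g.degree < f.degree := by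
  have hf : f ≠ 0 := by rintro rfl; exact hXf (dvd_zero X)
  rw [← Polynomial.div_eq_zero_iff hf]
  by_contra hq0
  have hq : X ^ m ∣ g / f := by
    refine prime_X.pow_dvd_of_dvd_mul_left m hXf ?_
    rw [eq_sub_of_add_eq (EuclideanDomain.div_add_mod g f)]
    exact dvd_sub hg hgf
  have hmq : m ≤ (g / f).natDegree := natDegree_X_pow (R := K) m ▸ natDegree_le_of_dvd hq hq0
  have hfg : f.degree ≤ g.degree := not_lt.mp (mt (Polynomial.div_eq_zero_iff hf).mpr hq0)
  have hfq : (f * (g / f)).natDegree = g.natDegree :=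
    natDegree_eq_of_degree_eq (by rw [degree_mul, degree_add_div hf hfg])
  rw [natDegree_mul hf hq0] at hfq
  omega

lemma eq_zero_of_truncPoly_mul_X_pow_mod_eq_zero {f a h : K[X]} {n m t k : ℕ}
    (hf : f.natDegree = n) (hXf : ¬ X ∣ f) (ha : a ≠ 0) (hadeg : a.natDegree = m)
    (htm : m ≤ t) (hnt : n ≤ m + t) (htk : t + k ≤ n) (hh : h.degree < k)
    (htrunc : truncPoly m (a * X ^ t * h % f) = 0) : h = 0 := by
  by_contra hne
  have hXt : (X : K[X]) ^ t ≠ 0 := pow_ne_zero t X_ne_zero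
  have hg0 : a * X ^ t * h ≠ 0 := mul_ne_zero (mul_ne_zero ha hXt) hne
  have hgdeg : (a * X ^ t * h).natDegree = m + t + h.natDegree := by
    rw [natDegree_mul (mul_ne_zero ha hXt) hne, natDegree_mul ha hXt, natDegree_X_pow, hadeg]
  have hhk : h.natDegree < k := (natDegree_lt_iff_degree_lt hne).mpr hh
  have hXg : X ^ m ∣ a * X ^ t * h := ((pow_dvd_pow X htm).mul_left a).mul_right h
  have hlt := degree_lt_of_X_pow_dvd_mod hXf hXg (X_pow_dvd_of_truncPoly_eq_zero htrunc)
    (by omega)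
  have := natDegree_lt_natDegree hg0 hlt
  omega

lemma linearIndependent_truncPoly_mul_X_pow_mod {f a : K[X]} {n m t k : ℕ}
    (hf : f.natDegree = n) (hXf : ¬ X ∣ f) (ha : a ≠ 0) (hadeg : a.natDegree = m)
    (htm : m ≤ t) (hnt : n ≤ m + t) (htk : t + k ≤ n) :
    LinearIndependent K fun i : Fin k => truncPoly m (a * X ^ (t + (i : ℕ)) % f) := by
  let φ := truncPolyₗ m ∘ₗ modₗ f ∘ₗ LinearMap.mulLeft K (a * X ^ t)
  have hX : LinearIndependent K fun i : Fin k => (X : K[X]) ^ (i : ℕ) := by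
    simpa [Function.comp_def, coe_basisMonomials, monomial_one_right_eq_X_pow] using
      (basisMonomials K).linearIndependent.comp Fin.val Fin.val_injective
  have hspan : Submodule.span K (Set.range fun i : Fin k => (X : K[X]) ^ (i : ℕ)) ≤
      degreeLT K k := by
    rw [Submodule.span_le]
    rintro _ ⟨i, rfl⟩
    exact mem_degreeLT.mpr (by simp)
  have hφ := hX.map (f := φ) <| Submodule.disjoint_def.mpr fun h hs hker =>
    eq_zero_of_truncPoly_mul_X_pow_mod_eq_zero hf hXf ha hadeg htm hnt htk
      (mem_degreeLT.mp (hspan hs)) hker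
  have hφ_apply : (φ ∘ fun i : Fin k => X ^ (i : ℕ)) =
      fun i : Fin k => truncPoly m (a * X ^ (t + (i : ℕ)) % f) := by
    ext1 i
    simp [φ, pow_add]
  rwa [hφ_apply] at hφ

theorem truncations_linearIndependent_general
    (n m : ℕ) (hmn : m < n)
    (f a : K[X]) (hf : f.natDegree = n) (hf0 : f.eval 0 ≠ 0)
    (ha : a.Monic) (hadeg : a.natDegree = m) :
    (2 * m ≤ n →
      LinearIndependent K fun i : Fin m =>
        truncPoly m ((a * X ^ (n - m + (i : ℕ))) % f)) ∧
    (n < 2 * m →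
      LinearIndependent K fun i : Fin (n - m) =>
        truncPoly m ((a * X ^ (m + (i : ℕ))) % f)) := by
  have hXf : ¬ X ∣ f := by rwa [X_dvd_iff, coeff_zero_eq_eval_zero]
  constructor
  · intro h2m
    exact linearIndependent_truncPoly_mul_X_pow_mod hf hXf ha.ne_zero hadeg
      (by omega) (by omega) (by omega)
  · intro h2m
    exact linearIndependent_truncPoly_mul_X_pow_mod hf hXf ha.ne_zero hadeg
      le_rfl (by omega) (by omega)

/-- with `p_i = [(a·x^(n-m+i)) mod f]_0^{m-1}`,
(i) if `2m ≤ n` the polynomials `p_0, …, p_{m-1}` are linearly independent over `K`;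
(ii) if `n < 2m` the polynomials `p_{2m-n}, …, p_{m-1}` are linearly independent over `K`. -/
theorem truncations_linearIndependent
    (n m : ℕ) (hm : 1 ≤ m) (hmn : m < n)
    (f a : K[X]) (hf : f.natDegree = n) (hf0 : f.eval 0 ≠ 0)
    (ha : a.Monic) (hadeg : a.natDegree = m) :
    (2 * m ≤ n →
      LinearIndependent K fun i : Fin m =>
        truncPoly m ((a * X ^ (n - m + (i : ℕ))) % f)) ∧
    (n < 2 * m →
      LinearIndependent K fun i : Fin (n - m) =>
        truncPoly m ((a * X ^ (m + (i : ℕ))) % f)) :=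
  truncations_linearIndependent_general n m hmn f a hf hf0 ha hadeg
end
end

section
/- Let m ≤ n be positive integers and let R = ℤ[ā_0, …, ā_{n−1}, f̄_0, …, f̄_{n−1}] be the polynomial ring over ℤ in 2n indeterminates. Set f̄ = f̄_0 + ⋯ + f̄_{n−1}·x^{n−1} + x^n and ā = ā_0 + ⋯ + ā_{n−1}·x^{n−1} in R[x], and let Hk_{m,⌈n/m⌉}(ā,f̄) be the block Hankel matrix over R built from M_{ā}. Then every n×n minor Δ of Hk_{m,⌈n/m⌉}(ā,f̄) satisfies m·deg_{ā}(Δ) ≤ 2n² and m·deg_{f̄}(Δ) ≤ 2n²·(n−1), where deg_{ā} (resp. deg_{f̄}) denotes the total degree in the variables ā_0, …, ā_{n−1} (resp. f̄_0, …, f̄_{n−1}). -/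
open Polynomial Matrix

noncomputable section

/-- Matrix of multiplication by `a` modulo the monic polynomial `f` over a commutative ring,
in the basis `1, x, ..., x^(n-1)`: its `k`-th column is the coefficient vector of
`(x^k * a) mod f` (remainder in division by the monic `f`). -/
def mulMatM {R : Type*} [CommRing R] (f a : R[X]) (n : ℕ) : Matrix (Fin n) (Fin n) R :=
  fun i k => ((X ^ (k : ℕ) * a) %ₘ f).coeff (i : ℕ)

/-- The `n×m` matrix `X` whose top `m×m` block is the identity. -/
def XupM (R : Type*) [Zero R] [One R] (n m : ℕ) : Matrix (Fin n) (Fin m) R :=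
  fun i j => if (i : ℕ) = (j : ℕ) then 1 else 0

/-- The block Hankel matrix `Hk_{m,d}(a,f)` over a commutative ring, indexed by
`Fin d × Fin m`; its `((i,r),(j,c))` entry is `(Xᵀ · M_a^(i+j) · X) r c`. -/
def hankelMatM {R : Type*} [CommRing R] (f a : R[X]) (n m d : ℕ) :
    Matrix (Fin d × Fin m) (Fin d × Fin m) R :=
  fun p q => ((XupM R n m)ᵀ * (mulMatM f a n) ^ ((p.1 : ℕ) + (q.1 : ℕ)) * XupM R n m) p.2 q.2

/-- The generic polynomial `ā = ā_0 + ā_1 x + ⋯ + ā_{n-1} x^{n-1}`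
(`Sum.inl` indexes the `ā` variables). -/
def genericA (n : ℕ) : Polynomial (MvPolynomial (Fin n ⊕ Fin n) ℤ) :=
  ∑ i : Fin n, C (MvPolynomial.X (Sum.inl i)) * X ^ (i : ℕ)

/-- The generic monic polynomial `f̄ = f̄_0 + ⋯ + f̄_{n-1} x^{n-1} + x^n`
(`Sum.inr` indexes the `f̄` variables). -/
def genericF (n : ℕ) : Polynomial (MvPolynomial (Fin n ⊕ Fin n) ℤ) :=
  X ^ n + ∑ i : Fin n, C (MvPolynomial.X (Sum.inr i)) * X ^ (i : ℕ)

/-- Total degree in the `ā`-variables (the `Sum.inl` ones). -/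
def degInA {n : ℕ} (p : MvPolynomial (Fin n ⊕ Fin n) ℤ) : ℕ :=
  p.support.sup fun s => ∑ i : Fin n, s (Sum.inl i)

/-- Total degree in the `f̄`-variables (the `Sum.inr` ones). -/
def degInF {n : ℕ} (p : MvPolynomial (Fin n ⊕ Fin n) ℤ) : ℕ :=
  p.support.sup fun s => ∑ i : Fin n, s (Sum.inr i)


/-!
Give each variable `ā_i` weight `wa` and each `f̄_i` weight `wf`. Reducing `x^j` modulo `f̄` one
degree at a time, `x^(j+1) mod f̄ = x·r − r_{n−1}·f̄` with `r = x^j mod f̄`, shows that the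
coefficients of `x^j mod f̄` have weight at most `(j+1−n)·wf`. Since `(x^k·ā) mod f̄` is
`∑ ā_j·(x^(k+j) mod f̄)` with `k + j ≤ 2n − 2`, every entry of `M_ā` has weight at most
`D = wa + (n−1)·wf`, so every entry of the `(i,j)` block of the Hankel matrix has weight at most
`(i+j)·D`. By the Leibniz formula a minor then has weight at most `T·D`, where `T` is the sum of the
block indices of its rows and columns. As the rows (and the columns) are distinct, `T ≤ m·d(d−1)`
for `d = ⌈n/m⌉`, and `m²·d(d−1) = (m·d)(m·(d−1)) ≤ 2n·n`. The weights `(1,0)` and `(0,1)` give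
the two bounds.
-/

namespace MvPolynomial

variable {R σ : Type*} [CommSemiring R] (w : σ → ℕ)

def weightedDegreeLE (k : ℕ) : Submodule R (MvPolynomial σ R) :=
  restrictSupport R {s | Finsupp.weight w s ≤ k}

variable {w}

theorem mem_weightedDegreeLE_iff {k : ℕ} {p : MvPolynomial σ R} :
    p ∈ weightedDegreeLE w k ↔ weightedTotalDegree w p ≤ k := by
  rw [weightedDegreeLE, mem_restrictSupport_iff, weightedTotalDegree, Finset.sup_le_iff]
  rfl

theorem weightedDegreeLE_mono {k l : ℕ} (h : k ≤ l) :
    weightedDegreeLE w k ≤ (weightedDegreeLE w l : Submodule R (MvPolynomial σ R)) :=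
  restrictSupport_mono R fun _ hs => le_trans hs h

theorem C_mem_weightedDegreeLE (r : R) (k : ℕ) : C r ∈ weightedDegreeLE w k :=
  (monomial_mem_restrictSupport R).2 (Or.inl (by simp))

theorem X_mem_weightedDegreeLE (i : σ) : (X i : MvPolynomial σ R) ∈ weightedDegreeLE w (w i) :=
  (monomial_mem_restrictSupport R).2 (Or.inl (by simp [Finsupp.weight_single]))

theorem ite_one_zero_mem_weightedDegreeLE (P : Prop) [Decidable P] (k : ℕ) :
    (if P then 1 else 0 : MvPolynomial σ R) ∈ weightedDegreeLE w k := by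
  split_ifs
  · exact C_mem_weightedDegreeLE 1 k
  · exact zero_mem _

theorem weightedDegreeLE_mul_le (k l : ℕ) :
    weightedDegreeLE w k * weightedDegreeLE w l ≤
      (weightedDegreeLE w (k + l) : Submodule R (MvPolynomial σ R)) := by
  rw [weightedDegreeLE, weightedDegreeLE, ← restrictSupport_add]
  refine restrictSupport_mono R ?_
  rintro _ ⟨s, hs, t, ht, rfl⟩
  simp only [Set.mem_ofPred_eq, map_add] at hs ht ⊢
  omega

theorem mul_mem_weightedDegreeLE {k l : ℕ} {p q : MvPolynomial σ R}
    (hp : p ∈ weightedDegreeLE w k) (hq : q ∈ weightedDegreeLE w l) :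
    p * q ∈ weightedDegreeLE w (k + l) :=
  weightedDegreeLE_mul_le k l (Submodule.mul_mem_mul hp hq)

theorem prod_mem_weightedDegreeLE {ι : Type*} (s : Finset ι) (p : ι → MvPolynomial σ R)
    (k : ι → ℕ) (h : ∀ i ∈ s, p i ∈ weightedDegreeLE w (k i)) :
    ∏ i ∈ s, p i ∈ weightedDegreeLE w (∑ i ∈ s, k i) := by
  induction s using Finset.cons_induction with
  | empty => exact C_mem_weightedDegreeLE 1 0
  | cons a s ha ih =>
    rw [Finset.prod_cons, Finset.sum_cons]
    exact mul_mem_weightedDegreeLE (h a (s.mem_cons_self a))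
      (ih fun i hi => h i (Finset.mem_cons_of_mem hi))

end MvPolynomial

open MvPolynomial (weightedDegreeLE mem_weightedDegreeLE_iff weightedDegreeLE_mono
  mul_mem_weightedDegreeLE prod_mem_weightedDegreeLE ite_one_zero_mem_weightedDegreeLE
  X_mem_weightedDegreeLE)

namespace Matrix

variable {R σ ι κ ν : Type*} {w : σ → ℕ}

section CommSemiring

variable [CommSemiring R]

theorem mul_apply_mem_weightedDegreeLE [Fintype κ] {A : Matrix ι κ (MvPolynomial σ R)}
    {B : Matrix κ ν (MvPolynomial σ R)} {a b : ℕ} (hA : ∀ i j, A i j ∈ weightedDegreeLE w a)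
    (hB : ∀ i j, B i j ∈ weightedDegreeLE w b) (i : ι) (k : ν) :
    (A * B) i k ∈ weightedDegreeLE w (a + b) :=
  Submodule.sum_mem _ fun j _ => mul_mem_weightedDegreeLE (hA i j) (hB j k)

theorem pow_apply_mem_weightedDegreeLE [Fintype ι] [DecidableEq ι]
    {M : Matrix ι ι (MvPolynomial σ R)} {d : ℕ} (hM : ∀ i j, M i j ∈ weightedDegreeLE w d)
    (p : ℕ) (i j : ι) : (M ^ p) i j ∈ weightedDegreeLE w (p * d) := by
  induction p generalizing i j with
  | zero => exact ite_one_zero_mem_weightedDegreeLE _ _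
  | succ p ih =>
    rw [pow_succ, Nat.succ_mul]
    exact mul_apply_mem_weightedDegreeLE ih hM i j

end CommSemiring

theorem det_mem_weightedDegreeLE [CommRing R] [Fintype ι] [DecidableEq ι]
    {A : Matrix ι ι (MvPolynomial σ R)} (u v : ι → ℕ)
    (hA : ∀ i j, A i j ∈ weightedDegreeLE w (u i + v j)) :
    A.det ∈ weightedDegreeLE w (∑ i, u i + ∑ j, v j) := by
  rw [det_apply]
  refine Submodule.sum_mem _ fun τ _ => ?_
  rw [Units.smul_def]
  refine Submodule.smul_of_tower_mem _ _ ?_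
  have := prod_mem_weightedDegreeLE Finset.univ (fun i => A (τ i) i) (fun i => u (τ i) + v i)
    fun i _ => hA _ _
  rwa [Finset.sum_add_distrib, Equiv.sum_comp τ u] at this

end Matrix

theorem hankelMatM_apply_mem_weightedDegreeLE {R σ : Type*} [CommRing R] {w : σ → ℕ}
    {f a : (MvPolynomial σ R)[X]} {n m d k : ℕ}
    (hM : ∀ i j, mulMatM f a n i j ∈ weightedDegreeLE w k) (p q : Fin d × Fin m) :
    hankelMatM f a n m d p q ∈ weightedDegreeLE w (((p.1 : ℕ) + q.1) * k) := by
  have hX : ∀ i j, XupM (MvPolynomial σ R) n m i j ∈ weightedDegreeLE w 0 :=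
    fun _ _ => ite_one_zero_mem_weightedDegreeLE _ _
  have hXt : ∀ i j, (XupM (MvPolynomial σ R) n m)ᵀ i j ∈ weightedDegreeLE w 0 :=
    fun i j => hX j i
  simpa [hankelMatM] using Matrix.mul_apply_mem_weightedDegreeLE
    (Matrix.mul_apply_mem_weightedDegreeLE hXt (Matrix.pow_apply_mem_weightedDegreeLE hM _))
    hX p.2 q.2

namespace Polynomial

variable {S : Type*} [CommRing S] {f : S[X]}

theorem modByMonic_eq_sub_C_mul (hf : f.Monic) {g : S[X]} (hg : g.natDegree ≤ f.natDegree) :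
    g %ₘ f = g - C (g.coeff f.natDegree) * f := by
  nontriviality S
  refine (div_modByMonic_unique (C (g.coeff f.natDegree)) _ hf ⟨by ring, ?_⟩).2
  rw [degree_eq_natDegree hf.ne_zero, degree_lt_iff_coeff_zero]
  intro k hk
  have hk : f.natDegree ≤ k := by exact_mod_cast hk
  rw [coeff_sub, coeff_C_mul]
  rcases hk.eq_or_lt with heq | hlt
  · rw [← heq, hf.coeff_natDegree, mul_one, sub_self]
  · rw [coeff_eq_zero_of_natDegree_lt (hg.trans_lt hlt), coeff_eq_zero_of_natDegree_lt hlt,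
      mul_zero, sub_zero]

theorem X_pow_modByMonic_of_lt (hf : f.Monic) {j : ℕ} (hj : j < f.natDegree) :
    X ^ j %ₘ f = X ^ j := by
  nontriviality S
  rw [modByMonic_eq_self_iff hf, degree_X_pow, degree_eq_natDegree hf.ne_zero]
  exact_mod_cast hj

theorem X_pow_succ_modByMonic (hf : f.Monic) (hpos : 0 < f.natDegree) (j : ℕ) :
    X ^ (j + 1) %ₘ f = X * (X ^ j %ₘ f) - C ((X ^ j %ₘ f).coeff (f.natDegree - 1)) * f := by
  nontriviality S
  have hf1 : f ≠ 1 := by rintro rfl; exact hpos.ne' natDegree_one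
  have hlt := natDegree_modByMonic_lt (X ^ j) hf hf1
  have hdeg : (X * (X ^ j %ₘ f)).natDegree ≤ f.natDegree := by
    refine natDegree_mul_le.trans ?_
    have := natDegree_X_le (R := S)
    omega
  have hdvd : f ∣ X ^ (j + 1) - X * (X ^ j %ₘ f) := by
    rw [pow_succ', ← mul_sub, ← neg_sub, mul_neg, dvd_neg]
    exact (dvd_modByMonic_sub _ _).mul_left X
  rw [modByMonic_eq_of_dvd_sub hf hdvd, modByMonic_eq_sub_C_mul hf hdeg]
  conv_lhs => rw [show f.natDegree = f.natDegree - 1 + 1 by omega, coeff_X_mul]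

end Polynomial

theorem coeff_X_pow_modByMonic_mem_weightedDegreeLE {R σ : Type*} [CommRing R] {w : σ → ℕ}
    {f : (MvPolynomial σ R)[X]} (hf : f.Monic) (hpos : 0 < f.natDegree) {d : ℕ}
    (hfd : ∀ i, f.coeff i ∈ weightedDegreeLE w d) (j i : ℕ) :
    (X ^ j %ₘ f).coeff i ∈ weightedDegreeLE w ((j + 1 - f.natDegree) * d) := by
  induction j generalizing i with
  | zero =>
    rw [X_pow_modByMonic_of_lt hf hpos, coeff_X_pow]
    exact ite_one_zero_mem_weightedDegreeLE _ _
  | succ j ih =>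
    by_cases hj : j + 1 < f.natDegree
    · rw [X_pow_modByMonic_of_lt hf hj, coeff_X_pow]
      exact ite_one_zero_mem_weightedDegreeLE _ _
    · have hk : j + 1 + 1 - f.natDegree = j + 1 - f.natDegree + 1 := by omega
      rw [X_pow_succ_modByMonic hf hpos, coeff_sub, coeff_C_mul, hk, add_mul, one_mul]
      refine sub_mem (weightedDegreeLE_mono (Nat.le_add_right _ _) ?_)
        (mul_mem_weightedDegreeLE (ih _) (hfd i))
      cases i with
      | zero => rw [mul_coeff_zero, coeff_X_zero, zero_mul]; exact zero_mem _
      | succ i => rw [coeff_X_mul]; exact ih i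

section Generic

variable {n : ℕ}

theorem genericF_monic : (genericF n).Monic :=
  monic_X_pow_add (degree_sum_fin_lt _)

theorem genericF_natDegree : (genericF n).natDegree = n := by
  rw [genericF, natDegree_add_eq_left_of_degree_lt, natDegree_X_pow]
  rw [degree_X_pow]
  exact degree_sum_fin_lt _

theorem coeff_genericF_mem_weightedDegreeLE (wa wf i : ℕ) :
    (genericF n).coeff i ∈ weightedDegreeLE (Sum.elim (fun _ => wa) (fun _ => wf)) wf := by
  rw [genericF, coeff_add, coeff_X_pow, finsetSum_coeff]
  refine add_mem (ite_one_zero_mem_weightedDegreeLE _ _) (Submodule.sum_mem _ fun j _ => ?_)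
  have hX : (MvPolynomial.X (Sum.inr j) : MvPolynomial (Fin n ⊕ Fin n) ℤ) ∈
      weightedDegreeLE (Sum.elim (fun _ => wa) (fun _ => wf)) wf := X_mem_weightedDegreeLE _
  rw [coeff_C_mul, coeff_X_pow]
  simpa using mul_mem_weightedDegreeLE hX (ite_one_zero_mem_weightedDegreeLE _ 0)

theorem coeff_X_pow_mul_genericA_modByMonic (k i : ℕ) :
    ((X ^ k * genericA n) %ₘ genericF n).coeff i =
      ∑ j : Fin n, MvPolynomial.X (Sum.inl j) * (X ^ (k + j) %ₘ genericF n).coeff i := by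
  have h : X ^ k * genericA n = ∑ j : Fin n, C (MvPolynomial.X (Sum.inl j)) * X ^ (k + j) := by
    rw [genericA, Finset.mul_sum]
    exact Finset.sum_congr rfl fun j _ => by ring
  rw [h, ← modByMonicHom_apply, map_sum, finsetSum_coeff]
  refine Finset.sum_congr rfl fun j _ => ?_
  rw [modByMonicHom_apply, ← smul_eq_C_mul, smul_modByMonic, coeff_smul, smul_eq_mul]

theorem mulMatM_generic_apply_mem_weightedDegreeLE (hn : 0 < n) (wa wf : ℕ) (i k : Fin n) :
    mulMatM (genericF n) (genericA n) n i k ∈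
      weightedDegreeLE (Sum.elim (fun _ => wa) (fun _ => wf)) (wa + (n - 1) * wf) := by
  rw [mulMatM, coeff_X_pow_mul_genericA_modByMonic]
  refine Submodule.sum_mem _ fun j _ => mul_mem_weightedDegreeLE (X_mem_weightedDegreeLE _)
    (weightedDegreeLE_mono ?_ (coeff_X_pow_modByMonic_mem_weightedDegreeLE genericF_monic
      (genericF_natDegree.symm ▸ hn) (coeff_genericF_mem_weightedDegreeLE wa wf) _ _))
  rw [genericF_natDegree]
  exact Nat.mul_le_mul_right _ (by omega)

theorem det_submatrix_hankelMatM_generic_mem_weightedDegreeLE (hn : 0 < n) (wa wf : ℕ)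
    {m d : ℕ} (r c : Fin n → Fin d × Fin m) :
    ((hankelMatM (genericF n) (genericA n) n m d).submatrix r c).det ∈
      weightedDegreeLE (Sum.elim (fun _ => wa) (fun _ => wf))
        ((∑ i, ((r i).1 : ℕ) + ∑ i, ((c i).1 : ℕ)) * (wa + (n - 1) * wf)) := by
  rw [add_mul, Finset.sum_mul, Finset.sum_mul]
  refine Matrix.det_mem_weightedDegreeLE _ _ fun i j => ?_
  rw [← add_mul]
  exact hankelMatM_apply_mem_weightedDegreeLE
    (mulMatM_generic_apply_mem_weightedDegreeLE hn wa wf) _ _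

theorem degInA_eq_weightedTotalDegree (p : MvPolynomial (Fin n ⊕ Fin n) ℤ) :
    degInA p = p.weightedTotalDegree (Sum.elim (fun _ => 1) (fun _ => 0)) := by
  unfold degInA MvPolynomial.weightedTotalDegree
  congr 1
  funext s
  simp [Finsupp.weight_eq_sum, Fintype.sum_sum_type]

theorem degInF_eq_weightedTotalDegree (p : MvPolynomial (Fin n ⊕ Fin n) ℤ) :
    degInF p = p.weightedTotalDegree (Sum.elim (fun _ => 0) (fun _ => 1)) := by
  unfold degInF MvPolynomial.weightedTotalDegree
  congr 1
  funext s
  simp [Finsupp.weight_eq_sum, Fintype.sum_sum_type]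

end Generic

theorem two_mul_sum_fst_le_of_injective {k d m : ℕ} {g : Fin k → Fin d × Fin m}
    (hg : Function.Injective g) : 2 * ∑ i, ((g i).1 : ℕ) ≤ m * (d * (d - 1)) :=
  calc 2 * ∑ i, ((g i).1 : ℕ) = 2 * ∑ p ∈ Finset.univ.image g, (p.1 : ℕ) := by
        rw [Finset.sum_image fun _ _ _ _ h => hg h]
    _ ≤ 2 * ∑ p : Fin d × Fin m, (p.1 : ℕ) := by gcongr; exact Finset.subset_univ _
    _ = m * (d * (d - 1)) := by
        rw [Fintype.sum_prod_type, Fin.sum_univ_eq_sum_range (fun i => ∑ _ : Fin m, i) d]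
        simp only [Finset.sum_const, Finset.card_univ, Fintype.card_fin, smul_eq_mul]
        rw [← Finset.mul_sum, mul_left_comm, mul_comm 2, Finset.sum_range_id_mul_two]

theorem mul_mul_ceilDiv_mul_pred_le {n m : ℕ} (hm : 0 < m) (hmn : m ≤ n) :
    m * (m * ((n ⌈/⌉ m) * (n ⌈/⌉ m - 1))) ≤ 2 * n ^ 2 := by
  have hd : m * (n ⌈/⌉ m) ≤ n + m - 1 := by
    rw [Nat.ceilDiv_eq_add_pred_div, mul_comm]
    exact Nat.div_mul_le_self _ _
  set d := n ⌈/⌉ m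
  calc m * (m * (d * (d - 1))) = (m * d) * (m * (d - 1)) := by ring
    _ ≤ (2 * n) * n := Nat.mul_le_mul (by omega) (by rw [Nat.mul_sub_one]; omega)
    _ = 2 * n ^ 2 := by ring

/-- every `n×n` minor `Δ` of the generic block Hankel matrix
`Hk_{m,⌈n/m⌉}(ā,f̄)` satisfies `m·deg_ā Δ ≤ 2n²` and `m·deg_f̄ Δ ≤ 2n²(n-1)`. -/
theorem minor_degree_bound
    (n m : ℕ) (hm : 1 ≤ m) (hmn : m ≤ n)
    (r c : Fin n → Fin (n ⌈/⌉ m) × Fin m)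
    (hr : Function.Injective r) (hc : Function.Injective c) :
    m * degInA (((hankelMatM (genericF n) (genericA n) n m (n ⌈/⌉ m)).submatrix r c).det)
        ≤ 2 * n ^ 2 ∧
    m * degInF (((hankelMatM (genericF n) (genericA n) n m (n ⌈/⌉ m)).submatrix r c).det)
        ≤ 2 * n ^ 2 * (n - 1) := by
  have hn : 0 < n := hm.trans hmn
  set T := ∑ i, ((r i).1 : ℕ) + ∑ i, ((c i).1 : ℕ)
  have hT : m * T ≤ 2 * n ^ 2 := by
    have hr' := two_mul_sum_fst_le_of_injective hr
    have hc' := two_mul_sum_fst_le_of_injective hc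
    have hT : T ≤ m * ((n ⌈/⌉ m) * (n ⌈/⌉ m - 1)) := by omega
    exact (Nat.mul_le_mul_left m hT).trans (mul_mul_ceilDiv_mul_pred_le hm hmn)
  have hdet (wa wf : ℕ) := mem_weightedDegreeLE_iff.1
    (det_submatrix_hankelMatM_generic_mem_weightedDegreeLE hn wa wf r c)
  rw [degInA_eq_weightedTotalDegree, degInF_eq_weightedTotalDegree]
  constructor
  · calc m * _ ≤ m * T := Nat.mul_le_mul_left m (by simpa using hdet 1 0)
      _ ≤ 2 * n ^ 2 := hT
  · calc m * _ ≤ m * T * (n - 1) := by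
          rw [mul_assoc]; exact Nat.mul_le_mul_left m (by simpa using hdet 0 1)
      _ ≤ 2 * n ^ 2 * (n - 1) := Nat.mul_le_mul_right _ hT
end
end

section
/- Let K be a field, ξ_1, …, ξ_n ∈ K pairwise distinct, c ∈ K∖{0}, f = c·(x−ξ_1)⋯(x−ξ_n) ∈ K[x], and let a ∈ K[x] of degree < n take the values λ_1, …, λ_r at ξ_1, …, ξ_n with multiplicities ℓ_1, …, ℓ_r; let 1 ≤ m ≤ n and d ≥ 1. Then rank K_{m,d}(a,f) = rank P_{ℓ,m,d}(ξ_1, …, ξ_n, λ_1, …, λ_r). If moreover all ξ_k are nonzero, then rank L_{m,d}(a,f) = rank P_{ℓ,m,d}(1/ξ_1, …, 1/ξ_n, λ_1, …, λ_r). -/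
open Polynomial Matrix

noncomputable section

variable {K : Type*} [Field K]

/-- `s_i = ℓ_1 + ⋯ + ℓ_{i-1}`. -/
def partialSum {r : ℕ} (ℓ : Fin r → ℕ) (i : Fin r) : ℕ :=
  ∑ j ∈ Finset.Iio i, ℓ j

/-- `a` takes the (pairwise distinct) values `lam 1, …, lam r` at `ξ 1, …, ξ n` with
multiplicities `ℓ 1, …, ℓ r`. -/
def TakesValues {n r : ℕ} (a : K[X]) (ξ : Fin n → K) (lam : Fin r → K) (ℓ : Fin r → ℕ) : Prop :=
  Function.Injective lam ∧ (∀ i, 1 ≤ ℓ i) ∧ (∑ i, ℓ i = n) ∧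
    ∀ (k : Fin n) (i : Fin r), partialSum ℓ i ≤ (k : ℕ) →
      (k : ℕ) < partialSum ℓ i + ℓ i → a.eval (ξ k) = lam i

/-- The block Krylov matrix `K_{m,d}(a,f) = (X  M_a X  ⋯  M_a^{d-1} X)`,
with columns indexed by `Fin d × Fin m` (power first). -/
def krylovR (f a : K[X]) (n m d : ℕ) : Matrix (Fin n) (Fin d × Fin m) K :=
  fun i p => ((mulMat f a n) ^ ((p.1 : ℕ)) * Xup K n m) i p.2

/-- The block Krylov matrix `L_{m,d}(a,f)`, the vertical stack of `Xᵀ M_a^j`, `0 ≤ j < d`,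
with rows indexed by `Fin d × Fin m` (power first). -/
def krylovL (f a : K[X]) (n m d : ℕ) : Matrix (Fin d × Fin m) (Fin n) K :=
  fun p i => ((Xup K n m)ᵀ * (mulMat f a n) ^ ((p.1 : ℕ))) p.2 i

/-- The matrix `P_{ℓ,m,d}(u, w) = (V  D V  ⋯  D^{d-1} V)` where `V` is the Vandermonde-type
matrix with entries `u_k^j` (`j < m`) and `D = diag w`; columns indexed by `Fin d × Fin m`.
For the values `w k = λ_{i(k)}` grouped with multiplicities, `D` is the block-scalar diagonal
matrix of the λ's. -/
def pointsMat {n : ℕ} (u w : Fin n → K) (m d : ℕ) : Matrix (Fin n) (Fin d × Fin m) K :=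
  fun k p => w k ^ ((p.1 : ℕ)) * u k ^ ((p.2 : ℕ))

/-!
Evaluation at the nodes diagonalizes multiplication by `a` modulo `f`: since `f` vanishes at every
`ξ t`, the Vandermonde matrix `V` of the nodes satisfies `V * M_a = diag (a (ξ t)) * V`, so
`V * K_{m,d}(a, f) = P_{ℓ,m,d}(ξ, λ)` and `V` is invertible.

For `L_{m,d}` one transposes. The rows of `Xᵀ * V⁻¹` are the low coefficients of the Lagrange
basis `w_t * F / (X - ξ t)`, where `F = ∏ (X - ξ k)` and `w_t` are the nodal weights. Expanding
`1 / (X - ξ t)` as a power series in `X / ξ t` gives these coefficients as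
`diag (-w_t / ξ t) * V_m(1/ξ) * T`, where `T` is the upper triangular Toeplitz matrix of the
coefficients of `F`; its diagonal is `F(0) ≠ 0`.
-/

open Finset Kronecker

section BlockKrylov

variable {R : Type*} [CommRing R] {ι κ κ' : Type*} [Fintype ι] [DecidableEq ι]

def blockKrylov (A : Matrix ι ι R) (B : Matrix ι κ R) (d : ℕ) : Matrix ι (Fin d × κ) R :=
  of fun i p => (A ^ (p.1 : ℕ) * B) i p.2

theorem mul_blockKrylov_of_mul_eq {ι' : Type*} [Fintype ι'] [DecidableEq ι']
    {P : Matrix ι' ι R} {A : Matrix ι ι R} {A' : Matrix ι' ι' R} (h : P * A = A' * P)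
    (B : Matrix ι κ R) (d : ℕ) : P * blockKrylov A B d = blockKrylov A' (P * B) d := by
  ext i ⟨j, k⟩
  have hpow : ∀ e : ℕ, P * A ^ e = A' ^ e * P := by
    intro e
    induction e with
    | zero => simp
    | succ e ih => rw [pow_succ, pow_succ, ← Matrix.mul_assoc, ih, Matrix.mul_assoc, h,
        Matrix.mul_assoc]
  change (P * (A ^ (j : ℕ) * B)) i k = (A' ^ (j : ℕ) * (P * B)) i k
  rw [← Matrix.mul_assoc, ← Matrix.mul_assoc, hpow]

theorem blockKrylov_mul_one_kronecker [Fintype κ] (A : Matrix ι ι R) (B : Matrix ι κ R)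
    (C : Matrix κ κ' R) (d : ℕ) :
    blockKrylov A B d * ((1 : Matrix (Fin d) (Fin d) R) ⊗ₖ C) = blockKrylov A (B * C) d := by
  ext i ⟨j, k⟩
  rw [mul_apply, Fintype.sum_prod_type, Finset.sum_eq_single j
    (fun j' _ hj' => by simp [kroneckerMap_apply, one_apply_ne hj']) (by simp)]
  simp only [blockKrylov, kroneckerMap_apply, one_apply_eq, one_mul, of_apply, ← Matrix.mul_assoc]
  rfl

end BlockKrylov

theorem krylovR_eq_blockKrylov (f a : K[X]) (n m d : ℕ) :
    krylovR f a n m d = blockKrylov (mulMat f a n) (Xup K n m) d :=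
  rfl

theorem krylovL_transpose_eq_blockKrylov (f a : K[X]) (n m d : ℕ) :
    (krylovL f a n m d)ᵀ = blockKrylov (mulMat f a n)ᵀ (Xup K n m) d := by
  ext i ⟨j, k⟩
  simp only [krylovL, blockKrylov, of_apply, transpose_apply, ← transpose_pow]
  rw [← transpose_apply ((mulMat f a n ^ (j : ℕ))ᵀ * Xup K n m), transpose_mul, transpose_transpose]

theorem pointsMat_eq_blockKrylov {n : ℕ} (u w : Fin n → K) (m d : ℕ) :
    pointsMat u w m d = blockKrylov (diagonal w) (rectVandermonde u 1 m) d := by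
  ext k ⟨j, i⟩
  simp [pointsMat, blockKrylov, diagonal_pow, rectVandermonde]

theorem eval_mod_of_isRoot {f : K[X]} {x : K} (hx : f.IsRoot x) (p : K[X]) :
    (p % f).eval x = p.eval x := by
  rw [EuclideanDomain.mod_eq_sub_mul_div, eval_sub, eval_mul, hx.eq_zero, zero_mul, sub_zero]

theorem vandermonde_mulVec_coeff {R : Type*} [CommRing R] {n : ℕ} (v : Fin n → R) {p : R[X]}
    (hp : p.natDegree < n) : vandermonde v *ᵥ (fun i => p.coeff i) = fun t => p.eval (v t) := by
  ext t
  rw [eval_eq_sum_range' hp, ← Fin.sum_univ_eq_sum_range]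
  simp only [mulVec, dotProduct, vandermonde_apply, mul_comm]

theorem vandermonde_mul_mulMat {n : ℕ} {f : K[X]} (hf : f.natDegree = n) (ξ : Fin n → K)
    (hroot : ∀ t, f.IsRoot (ξ t)) (a : K[X]) :
    vandermonde ξ * mulMat f a n = diagonal (fun t => a.eval (ξ t)) * vandermonde ξ := by
  ext t k
  have hdeg : ((X ^ (k : ℕ) * a) % f).natDegree < n :=
    (natDegree_mod_lt _ (hf.trans_ne t.pos.ne')).trans_eq hf
  calc (vandermonde ξ * mulMat f a n) t k
      = (vandermonde ξ *ᵥ fun i => ((X ^ (k : ℕ) * a) % f).coeff i) t := rfl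
    _ = ((X ^ (k : ℕ) * a) % f).eval (ξ t) := by rw [vandermonde_mulVec_coeff ξ hdeg]
    _ = (diagonal (fun t => a.eval (ξ t)) * vandermonde ξ) t k := by
      rw [eval_mod_of_isRoot (hroot t), diagonal_mul, vandermonde_apply, eval_mul, eval_pow,
        eval_X, mul_comm]

theorem vandermonde_mul_Xup {n m : ℕ} (hmn : m ≤ n) (v : Fin n → K) :
    vandermonde v * Xup K n m = rectVandermonde v 1 m := by
  ext t k
  rw [mul_apply, Finset.sum_eq_single ⟨k, k.isLt.trans_le hmn⟩]
  · simp [Xup, vandermonde_apply, rectVandermonde]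
  · intro i _ hi
    have : (i : ℕ) ≠ k := fun h => hi (Fin.ext h)
    simp [Xup, this]
  · simp

theorem coeff_divByMonic_X_sub_C_of_isRoot {p : K[X]} {x : K} (hp : p.IsRoot x) (hx : x ≠ 0)
    (k : ℕ) : (p /ₘ (X - C x)).coeff k = -∑ u ∈ range (k + 1), p.coeff (k - u) * x⁻¹ ^ (u + 1) := by
  set q := p /ₘ (X - C x)
  have hpq : (X - C x) * q = p := mul_divByMonic_eq_iff_isRoot.mpr hp
  have hzero : p.coeff 0 = -x * q.coeff 0 := by
    rw [← hpq, mul_coeff_zero, coeff_sub, coeff_X_zero, coeff_C_zero, zero_sub]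
  have hsucc : ∀ k, p.coeff (k + 1) = q.coeff k - x * q.coeff (k + 1) := fun k => by
    rw [← hpq, sub_mul, coeff_sub, coeff_X_mul, coeff_C_mul]
  have hinv : x * x⁻¹ = 1 := mul_inv_cancel₀ hx
  induction k with
  | zero =>
    rw [sum_range_one, Nat.sub_zero, zero_add, pow_one]
    linear_combination x⁻¹ * hzero - q.coeff 0 * hinv
  | succ k ih =>
    have hshift : ∑ u ∈ range (k + 1), p.coeff (k + 1 - (u + 1)) * x⁻¹ ^ (u + 1 + 1)
        = x⁻¹ * ∑ u ∈ range (k + 1), p.coeff (k - u) * x⁻¹ ^ (u + 1) := by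
      rw [mul_sum]
      refine sum_congr rfl fun u _ => ?_
      rw [Nat.add_sub_add_right, pow_succ]
      ring
    rw [sum_range_succ', hshift]
    linear_combination x⁻¹ * ih + x⁻¹ * hsucc k - q.coeff (k + 1) * hinv

def lagrangeCoeffs {n : ℕ} (ξ : Fin n → K) (m : ℕ) : Matrix (Fin n) (Fin m) K :=
  of fun t k => (Lagrange.basis univ ξ t).coeff k

theorem vandermonde_transpose_mul_lagrangeCoeffs {n : ℕ} {ξ : Fin n → K}
    (hξ : Function.Injective ξ) (m : ℕ) : (vandermonde ξ)ᵀ * lagrangeCoeffs ξ m = Xup K n m := by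
  ext i k
  have hinterp := Lagrange.eq_interpolate (s := univ) hξ.injOn (f := X ^ (i : ℕ)) (by simp)
  calc ((vandermonde ξ)ᵀ * lagrangeCoeffs ξ m) i k
      = (Lagrange.interpolate univ ξ fun t => (X ^ (i : ℕ)).eval (ξ t)).coeff k := by
        simp only [mul_apply, transpose_apply, lagrangeCoeffs, of_apply, vandermonde_apply,
          Lagrange.interpolate_apply, finsetSum_coeff, eval_pow, eval_X, coeff_C_mul]
    _ = Xup K n m i k := by
        rw [← hinterp, coeff_X_pow]
        simp [Xup, eq_comm]

def coeffToeplitz (p : K[X]) (m : ℕ) : Matrix (Fin m) (Fin m) K :=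
  of fun u k => if (u : ℕ) ≤ k then p.coeff (k - u) else 0

theorem det_coeffToeplitz (p : K[X]) (m : ℕ) : (coeffToeplitz p m).det = p.coeff 0 ^ m := by
  rw [det_of_isUpperTriangular]
  · simp [coeffToeplitz]
  · intro i j hij
    simp only [coeffToeplitz, of_apply]
    rw [if_neg (not_le.mpr (show (j : ℕ) < i from hij))]

theorem sum_fin_ite_le_eq_sum_range {M : Type*} [AddCommMonoid M] {m k : ℕ} (hk : k < m)
    (g : ℕ → M) : ∑ u : Fin m, (if (u : ℕ) ≤ k then g u else 0) = ∑ u ∈ range (k + 1), g u := by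
  rw [Fin.sum_univ_eq_sum_range (fun u => if u ≤ k then g u else 0), ← sum_filter]
  congr 1
  ext u
  simp only [mem_filter, mem_range]
  omega

theorem lagrangeCoeffs_eq {n : ℕ} {ξ : Fin n → K} (hξ0 : ∀ t, ξ t ≠ 0) (m : ℕ) :
    lagrangeCoeffs ξ m = diagonal (fun t => -(Lagrange.nodalWeight univ ξ t * (ξ t)⁻¹))
      * rectVandermonde (fun t => (ξ t)⁻¹) 1 m * coeffToeplitz (Lagrange.nodal univ ξ) m := by
  ext t k
  have hroot : (Lagrange.nodal univ ξ).IsRoot (ξ t) := Lagrange.eval_nodal_at_node (mem_univ t)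
  rw [lagrangeCoeffs, of_apply, Lagrange.basis_eq_prod_sub_inv_mul_nodal_div (mem_univ t),
    ← divByMonic_eq_div _ (monic_X_sub_C _), coeff_C_mul,
    coeff_divByMonic_X_sub_C_of_isRoot hroot (hξ0 t), mul_apply]
  simp only [diagonal_mul, rectVandermonde_apply, Pi.one_apply, one_pow, mul_one, coeffToeplitz,
    of_apply, mul_ite, mul_zero]
  rw [← sum_fin_ite_le_eq_sum_range k.isLt, mul_neg, mul_sum, ← sum_neg_distrib]
  refine sum_congr rfl fun u _ => ?_
  split_ifs <;> ring

section Factorizations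

variable {n : ℕ} {f : K[X]} (hf : f.natDegree = n) {ξ : Fin n → K} (hroot : ∀ t, f.IsRoot (ξ t))
include hf hroot

theorem vandermonde_mul_krylovR {m : ℕ} (hmn : m ≤ n) (a : K[X]) (d : ℕ) :
    vandermonde ξ * krylovR f a n m d = pointsMat ξ (fun t => a.eval (ξ t)) m d := by
  rw [krylovR_eq_blockKrylov, mul_blockKrylov_of_mul_eq (vandermonde_mul_mulMat hf ξ hroot a),
    vandermonde_mul_Xup hmn, pointsMat_eq_blockKrylov]

theorem krylovL_transpose_eq (hξ : Function.Injective ξ) (hξ0 : ∀ t, ξ t ≠ 0) (a : K[X])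
    (m d : ℕ) :
    (krylovL f a n m d)ᵀ = (vandermonde ξ)ᵀ *
      (diagonal (fun t => -(Lagrange.nodalWeight univ ξ t * (ξ t)⁻¹))
        * pointsMat (fun t => (ξ t)⁻¹) (fun t => a.eval (ξ t)) m d
        * ((1 : Matrix (Fin d) (Fin d) K) ⊗ₖ coeffToeplitz (Lagrange.nodal univ ξ) m)) := by
  have hVM : (vandermonde ξ)ᵀ * diagonal (fun t => a.eval (ξ t))
      = (mulMat f a n)ᵀ * (vandermonde ξ)ᵀ := by
    rw [← transpose_mul, vandermonde_mul_mulMat hf ξ hroot a, transpose_mul, diagonal_transpose]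
  have hcomm : ∀ e w : Fin n → K, diagonal e * diagonal w = diagonal w * diagonal e := by
    intro e w
    simp only [diagonal_mul_diagonal, mul_comm]
  rw [krylovL_transpose_eq_blockKrylov, ← vandermonde_transpose_mul_lagrangeCoeffs hξ,
    ← mul_blockKrylov_of_mul_eq hVM, lagrangeCoeffs_eq hξ0, ← blockKrylov_mul_one_kronecker,
    ← mul_blockKrylov_of_mul_eq (hcomm _ _), pointsMat_eq_blockKrylov]

end Factorizations

theorem rank_krylov_eq_rank_points_general
    (n m d : ℕ) (hmn : m ≤ n)
    (ξ : Fin n → K) (hξ : Function.Injective ξ) (c : K) (hc : c ≠ 0)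
    (f : K[X]) (hfdef : f = C c * ∏ k : Fin n, (X - C (ξ k)))
    (a : K[X]) :
    (krylovR f a n m d).rank = (pointsMat ξ (fun k => a.eval (ξ k)) m d).rank ∧
    ((∀ k, ξ k ≠ 0) →
      (krylovL f a n m d).rank
        = (pointsMat (fun k => (ξ k)⁻¹) (fun k => a.eval (ξ k)) m d).rank) := by
  have hf : f.natDegree = n := by
    rw [hfdef, natDegree_C_mul hc]
    exact Lagrange.natDegree_nodal.trans (card_fin n)
  have hroot : ∀ t, f.IsRoot (ξ t) := fun t => by
    rw [hfdef, IsRoot, eval_mul, ← Lagrange.nodal, Lagrange.eval_nodal_at_node (mem_univ t),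
      mul_zero]
  have hV : IsUnit (vandermonde ξ).det := (det_vandermonde_ne_zero_iff.mpr hξ).isUnit
  refine ⟨?_, fun hξ0 => ?_⟩
  · rw [← vandermonde_mul_krylovR hf hroot hmn, rank_mul_eq_right_of_isUnit_det _ _ hV]
  have hE : IsUnit (diagonal fun t => -(Lagrange.nodalWeight univ ξ t * (ξ t)⁻¹)).det := by
    rw [det_diagonal]
    exact (prod_ne_zero_iff.mpr fun t _ => neg_ne_zero.mpr <|
      mul_ne_zero (Lagrange.nodalWeight_ne_zero hξ.injOn (mem_univ t)) (inv_ne_zero (hξ0 t))).isUnit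
  have hT : IsUnit ((1 : Matrix (Fin d) (Fin d) K) ⊗ₖ
      coeffToeplitz (Lagrange.nodal univ ξ) m).det := by
    rw [det_kronecker, det_one, one_pow, one_mul, det_coeffToeplitz, coeff_zero_eq_eval_zero,
      Lagrange.eval_nodal]
    exact (pow_ne_zero _ (pow_ne_zero _ (prod_ne_zero_iff.mpr fun t _ =>
      sub_ne_zero.mpr (hξ0 t).symm))).isUnit
  rw [← rank_transpose, krylovL_transpose_eq hf hroot hξ hξ0,
    rank_mul_eq_right_of_isUnit_det _ _ (det_transpose (vandermonde ξ) ▸ hV),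
    rank_mul_eq_left_of_isUnit_det _ _ hT, rank_mul_eq_right_of_isUnit_det _ _ hE]

theorem rank_krylov_eq_rank_points
    (n r m d : ℕ) (hn : 1 ≤ n) (hr : 1 ≤ r) (hm : 1 ≤ m) (hmn : m ≤ n) (hd : 1 ≤ d)
    (ξ : Fin n → K) (hξ : Function.Injective ξ) (c : K) (hc : c ≠ 0)
    (f : K[X]) (hfdef : f = C c * ∏ k : Fin n, (X - C (ξ k)))
    (a : K[X]) (ha : a.degree < (n : WithBot ℕ))
    (lam : Fin r → K) (ℓ : Fin r → ℕ) (hval : TakesValues a ξ lam ℓ) :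
    (krylovR f a n m d).rank = (pointsMat ξ (fun k => a.eval (ξ k)) m d).rank ∧
    ((∀ k, ξ k ≠ 0) →
      (krylovL f a n m d).rank
        = (pointsMat (fun k => (ξ k)⁻¹) (fun k => a.eval (ξ k)) m d).rank) :=
  rank_krylov_eq_rank_points_general n m d hmn ξ hξ c hc f hfdef a
end
end

section
/- Let K be a field, ξ_1, …, ξ_n ∈ K pairwise distinct, c ∈ K∖{0}, f = c·(x−ξ_1)⋯(x−ξ_n) ∈ K[x], and let a ∈ K[x] of degree < n take the values λ_1, …, λ_r at ξ_1, …, ξ_n with multiplicities ℓ_1, …, ℓ_r; set s_i = ℓ_1 + ⋯ + ℓ_{i−1} and S_i = {s_i+1, …, s_i+ℓ_i}. Let L_k = ∏_{j≠k} (x−ξ_j)/(ξ_k−ξ_j) be the Lagrange interpolation polynomials and, for 1 ≤ i ≤ r and j ≥ 0, let P_{i,j} = Σ_{k∈S_i} ξ_k^j·L_k ∈ K[x]. Then, for every m with 1 ≤ m ≤ n, the Σ_{i=1}^r min(ℓ_i,m) polynomials P_{i,j} (1 ≤ i ≤ r, 0 ≤ j < min(ℓ_i,m)) are linearly independent over K,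 and for every g ∈ K[x,y] with deg_x g < m, the polynomial g(x, a(x)) mod f lies in their K-linear span. -/
open Polynomial

noncomputable section

variable {K : Type*} [Field K]

/-- The Lagrange interpolation polynomial `L_k = ∏_{j ≠ k} (x − ξ_j)/(ξ_k − ξ_j)`. -/
def lagrangeP {n : ℕ} (ξ : Fin n → K) (k : Fin n) : K[X] :=
  ∏ j ∈ Finset.univ.erase k, (C (ξ k - ξ j)⁻¹ * (X - C (ξ j)))

/-- The index set `S_i = {s_i + 1, …, s_i + ℓ_i}` of the `i`-th group. -/
def groupSet {n r : ℕ} (ℓ : Fin r → ℕ) (i : Fin r) : Finset (Fin n) :=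
  Finset.univ.filter fun k => partialSum ℓ i ≤ (k : ℕ) ∧ (k : ℕ) < partialSum ℓ i + ℓ i

/-- `P_{i,j} = Σ_{k ∈ S_i} ξ_k^j · L_k`. -/
def Ppoly {n r : ℕ} (ξ : Fin n → K) (ℓ : Fin r → ℕ) (i : Fin r) (j : ℕ) : K[X] :=
  ∑ k ∈ (groupSet ℓ i : Finset (Fin n)), C (ξ k ^ j) * lagrangeP ξ k

/-!
Evaluating at the nodes, `P_{i,j}(ξ_k)` is `ξ_k^j` for `k ∈ S_i` and `0` otherwise. A linear
relation among the `P_{i,j}` therefore gives, for each group `i`, a polynomial of degree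
`< min(ℓ_i, m) ≤ ℓ_i` vanishing at the `ℓ_i` distinct nodes of `S_i`, so it is zero.

For the span, `b mod f` with `b = g(x, a(x))` is the Lagrange interpolant `Σ_k b(ξ_k) L_k`.
On `S_i` the values `b(ξ_k)` are those of `t_i = g(x, λ_i)`, of degree `< m`; reducing `t_i`
modulo `∏_{k ∈ S_i} (x - ξ_k)` keeps these values and brings the degree below `ℓ_i` as well,
and `Σ_{k ∈ S_i} t(ξ_k) L_k = Σ_j t_j P_{i,j}` for `t = Σ_j t_j x^j`.
-/

open Finset

section Groups

variable {n r : ℕ} (ℓ : Fin r → ℕ)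

lemma partialSum_add_self (i : Fin r) : partialSum ℓ i + ℓ i = ∑ j ∈ Iic i, ℓ j := by
  rw [← Iio_insert, sum_insert notMem_Iio_self, add_comm, partialSum]

lemma partialSum_add_self_le_sum (i : Fin r) : partialSum ℓ i + ℓ i ≤ ∑ j, ℓ j :=
  partialSum_add_self ℓ i ▸ sum_le_sum_of_subset (subset_univ _)

lemma partialSum_add_self_le_of_lt {i i' : Fin r} (h : i < i') :
    partialSum ℓ i + ℓ i ≤ partialSum ℓ i' :=
  partialSum_add_self ℓ i ▸
    sum_le_sum_of_subset fun _ hj => mem_Iio.2 ((mem_Iic.1 hj).trans_lt h)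

lemma mem_groupSet {i : Fin r} {k : Fin n} :
    k ∈ groupSet ℓ i ↔ partialSum ℓ i ≤ k ∧ (k : ℕ) < partialSum ℓ i + ℓ i := by
  simp [groupSet]

lemma disjoint_groupSet {i i' : Fin r} (h : i ≠ i') :
    Disjoint (groupSet (n := n) ℓ i) (groupSet ℓ i') := by
  wlog hlt : i < i' generalizing i i'
  · exact (this h.symm (lt_of_le_of_ne (not_lt.1 hlt) h.symm)).symm
  have := partialSum_add_self_le_of_lt ℓ hlt
  refine disjoint_left.2 fun k hk hk' => ?_
  rw [mem_groupSet] at hk hk'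
  omega

variable {ℓ}

lemma card_groupSet (hsum : ∑ i, ℓ i = n) (i : Fin r) : #(groupSet (n := n) ℓ i) = ℓ i := by
  have := partialSum_add_self_le_sum ℓ i
  have hmap : (groupSet (n := n) ℓ i).map Fin.valEmbedding =
      Ico (partialSum ℓ i) (partialSum ℓ i + ℓ i) := by
    ext x
    simp only [mem_map, mem_groupSet, Fin.valEmbedding_apply, mem_Ico]
    exact ⟨fun ⟨k, hk, hkx⟩ => hkx ▸ hk, fun hx => ⟨⟨x, by omega⟩, hx, rfl⟩⟩
  rw [← card_map, hmap, Nat.card_Ico, Nat.add_sub_cancel_left]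

lemma biUnion_groupSet (hsum : ∑ i, ℓ i = n) : univ.biUnion (groupSet (n := n) ℓ) = univ := by
  refine eq_univ_of_card _ ?_
  rw [card_biUnion fun i _ i' _ h => disjoint_groupSet ℓ h]
  simp [card_groupSet hsum, hsum]

lemma sum_eq_sum_sum_groupSet (hsum : ∑ i, ℓ i = n) {M : Type*} [AddCommMonoid M]
    (F : Fin n → M) :
    ∑ k, F k = ∑ i, ∑ k ∈ groupSet ℓ i, F k := by
  rw [← sum_biUnion fun i _ i' _ h => disjoint_groupSet ℓ h, biUnion_groupSet hsum]

end Groups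

section Interpolation

variable {n r : ℕ} {ξ : Fin n → K}

lemma eval_lagrangeP (hξ : Function.Injective ξ) (k k' : Fin n) :
    (lagrangeP ξ k).eval (ξ k') = if k' = k then 1 else 0 := by
  split_ifs with h
  · subst h
    exact Lagrange.eval_basis_self hξ.injOn (mem_univ k')
  · exact Lagrange.eval_basis_of_ne (Ne.symm h) (mem_univ k')

lemma eval_Ppoly (hξ : Function.Injective ξ) (ℓ : Fin r → ℕ) (i : Fin r) (j : ℕ)
    (k : Fin n) :
    (Ppoly ξ ℓ i j).eval (ξ k) = if k ∈ groupSet ℓ i then ξ k ^ j else 0 := by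
  simp [Ppoly, eval_finsetSum, eval_lagrangeP hξ]

lemma mod_eq_sum_C_eval_mul_lagrangeP (hξ : Function.Injective ξ) {c : K} (hc : c ≠ 0)
    (b : K[X]) :
    b % (C c * ∏ k, (X - C (ξ k))) = ∑ k, C (b.eval (ξ k)) * lagrangeP ξ k := by
  set f := C c * ∏ k, (X - C (ξ k))
  have hf : f.degree = n := by simp [f, degree_C_mul hc, degree_prod]
  have hroot (k : Fin n) : f.eval (ξ k) = 0 := by
    simp [f, eval_prod, prod_eq_zero (mem_univ k)]
  have hdeg : (b % f).degree < #(univ : Finset (Fin n)) := by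
    rw [card_univ, Fintype.card_fin, ← hf]
    exact EuclideanDomain.mod_lt b (by rintro h; simp [h] at hf)
  rw [Lagrange.eq_interpolate hξ.injOn hdeg, Lagrange.interpolate_apply]
  refine sum_congr rfl fun k _ => ?_
  rw [EuclideanDomain.mod_eq_sub_mul_div, eval_sub, eval_mul, hroot, zero_mul, sub_zero]
  rfl

lemma sum_C_eval_mul_lagrangeP_eq_sum_C_coeff_mul_Ppoly (ℓ : Fin r → ℕ) (i : Fin r) {d : ℕ}
    {t : K[X]} (ht : t.degree < d) :
    ∑ k ∈ groupSet ℓ i, C (t.eval (ξ k)) * lagrangeP ξ k =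
      ∑ j ∈ range d, C (t.coeff j) * Ppoly ξ ℓ i j := by
  have heval (x : K) : t.eval x = ∑ j ∈ range d, t.coeff j * x ^ j := by
    rcases eq_or_ne t 0 with rfl | ht0
    · simp
    · exact eval_eq_sum_range' ((natDegree_lt_iff_degree_lt ht0).2 ht) x
  simp_rw [Ppoly, mul_sum, ← mul_assoc, ← C_mul, heval, map_sum, sum_mul]
  exact sum_comm

lemma sum_C_mul_lagrangeP_mem_span {ℓ : Fin r → ℕ} (hsum : ∑ i, ℓ i = n) (i : Fin r)
    {m : ℕ} {t : K[X]} (ht : t.degree < m) {v : Fin n → K}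
    (hv : ∀ k ∈ groupSet ℓ i, v k = t.eval (ξ k)) :
    ∑ k ∈ groupSet ℓ i, C (v k) * lagrangeP ξ k ∈
      Submodule.span K (Set.range fun p : Σ i, Fin (min (ℓ i) m) => Ppoly ξ ℓ p.1 p.2) := by
  set F := Lagrange.nodal (groupSet ℓ i) ξ
  have hdeg : (t %ₘ F).degree < (min (ℓ i) m : ℕ) := by
    have hℓ : (t %ₘ F).degree < ℓ i := by
      rw [← card_groupSet hsum i, ← Lagrange.degree_nodal (R := K)]
      exact degree_modByMonic_lt t Lagrange.nodal_monic
    rcases min_choice (ℓ i) m with h | h <;> rw [h]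
    exacts [hℓ, degree_modByMonic_le_left.trans_lt ht]
  have hv' : ∀ k ∈ groupSet ℓ i, v k = (t %ₘ F).eval (ξ k) := fun k hk =>
    (hv k hk).trans (eval₂_modByMonic_eq_self_of_root (Lagrange.eval_nodal_at_node hk)).symm
  rw [sum_congr rfl fun k hk => by rw [hv' k hk],
    sum_C_eval_mul_lagrangeP_eq_sum_C_coeff_mul_Ppoly ℓ i hdeg]
  refine Submodule.sum_mem _ fun j hj => ?_
  rw [← smul_eq_C_mul]
  exact Submodule.smul_mem _ _ (Submodule.subset_span ⟨⟨i, j, mem_range.1 hj⟩, rfl⟩)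

lemma eq_zero_of_forall_sum_mul_pow_eq_zero {d : ℕ} {v : Fin d → K} {s : Finset K}
    (hs : d ≤ #s) (h : ∀ x ∈ s, ∑ j, v j * x ^ (j : ℕ) = 0) : v = 0 := by
  set p := (degreeLTEquiv K d).symm v
  have hp : (p : K[X]) = 0 := by
    refine Polynomial.eq_zero_of_degree_lt_of_eval_finset_eq_zero s
      ((mem_degreeLT.1 p.2).trans_le (by exact_mod_cast hs)) fun x hx => ?_
    rw [eval_eq_sum_degreeLTEquiv p.2]
    simpa [p] using h x hx
  simpa [p] using congrArg (degreeLTEquiv K d) (Subtype.ext hp : p = 0)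

lemma eval_sum_smul_Ppoly (hξ : Function.Injective ξ) (ℓ d : Fin r → ℕ)
    (c : (Σ i, Fin (d i)) → K) {i : Fin r} {k : Fin n} (hk : k ∈ groupSet ℓ i) :
    (∑ p, c p • Ppoly ξ ℓ p.1 p.2).eval (ξ k) = ∑ j, c ⟨i, j⟩ * ξ k ^ (j : ℕ) := by
  rw [eval_finsetSum, ← univ_sigma_univ, sum_sigma, sum_eq_single i]
  · simp [smul_eq_C_mul, eval_Ppoly hξ, hk]
  · intro i' _ hi'
    have hk' : k ∉ groupSet ℓ i' := disjoint_right.1 (disjoint_groupSet ℓ hi') hk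
    simp [smul_eq_C_mul, eval_Ppoly hξ, hk']
  · simp

lemma Ppoly_linearIndependent (hξ : Function.Injective ξ) {ℓ : Fin r → ℕ}
    (hsum : ∑ i, ℓ i = n) (d : Fin r → ℕ) (hd : ∀ i, d i ≤ ℓ i) :
    LinearIndependent K fun p : Σ i, Fin (d i) => Ppoly ξ ℓ p.1 p.2 := by
  classical
  rw [Fintype.linearIndependent_iff]
  rintro c hc ⟨i, j⟩
  have hci : (fun j => c ⟨i, j⟩) = 0 := by
    refine eq_zero_of_forall_sum_mul_pow_eq_zero (s := (groupSet ℓ i).image ξ) ?_ ?_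
    · rw [card_image_of_injective _ hξ, card_groupSet hsum]
      exact hd i
    · simp only [mem_image, forall_exists_index, and_imp]
      rintro _ k hk rfl
      rw [← eval_sum_smul_Ppoly hξ ℓ d c hk, hc, eval_zero]
  exact congrFun hci j

end Interpolation

lemma eval_aeval_eq_of_eval_eq {a a' : K[X]} {x : K} (h : a.eval x = a'.eval x)
    (g : MvPolynomial (Fin 2) K) :
    (MvPolynomial.aeval ![X, a] g).eval x = (MvPolynomial.aeval ![X, a'] g).eval x := by
  simp only [← coe_aeval_eq_eval, MvPolynomial.comp_aeval_apply]
  congr 2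
  ext i
  fin_cases i <;> simp [h]

lemma natDegree_aeval_X_C_le (g : MvPolynomial (Fin 2) K) (y : K) :
    (MvPolynomial.aeval ![X, C y] g).natDegree ≤ g.degreeOf 0 := by
  rw [MvPolynomial.aeval_def, MvPolynomial.eval₂_eq']
  refine natDegree_sum_le_of_forall_le _ _ fun e he => ?_
  simp only [Fin.prod_univ_two, Matrix.cons_val_zero, Matrix.cons_val_one,
    ← C_pow, algebraMap_eq]
  refine (natDegree_C_mul_le _ _).trans <| (natDegree_mul_C_le _ _).trans ?_
  exact (natDegree_X_pow_le _).trans (MvPolynomial.monomial_le_degreeOf 0 he)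

theorem Ppoly_linearIndependent_and_span_general
    (n r m : ℕ)
    (ξ : Fin n → K) (hξ : Function.Injective ξ) (c : K) (hc : c ≠ 0)
    (f : K[X]) (hfdef : f = C c * ∏ k : Fin n, (X - C (ξ k)))
    (a : K[X])
    (lam : Fin r → K) (ℓ : Fin r → ℕ) (hval : TakesValues a ξ lam ℓ) :
    LinearIndependent K
      (fun p : (Σ i : Fin r, Fin (min (ℓ i) m)) => Ppoly ξ ℓ p.1 ((p.2 : ℕ))) ∧
    ∀ g : MvPolynomial (Fin 2) K, g.degreeOf 0 < m →
      (MvPolynomial.aeval ![(X : K[X]), a] g) % f ∈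
        Submodule.span K
          (Set.range fun p : (Σ i : Fin r, Fin (min (ℓ i) m)) =>
            Ppoly ξ ℓ p.1 ((p.2 : ℕ))) := by
  obtain ⟨-, -, hsum, hvals⟩ := hval
  refine ⟨Ppoly_linearIndependent hξ hsum _ fun i => min_le_left _ m, fun g hg => ?_⟩
  rw [hfdef, mod_eq_sum_C_eval_mul_lagrangeP hξ hc, sum_eq_sum_sum_groupSet hsum]
  refine Submodule.sum_mem _ fun i _ =>
    sum_C_mul_lagrangeP_mem_span hsum i (t := MvPolynomial.aeval ![X, C (lam i)] g) ?_ ?_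
  · exact (degree_le_of_natDegree_le (natDegree_aeval_X_C_le g (lam i))).trans_lt
      (by exact_mod_cast hg)
  · intro k hk
    obtain ⟨hk₁, hk₂⟩ := (mem_groupSet ℓ).1 hk
    exact eval_aeval_eq_of_eval_eq (by rw [eval_C, hvals k i hk₁ hk₂]) g

theorem Ppoly_linearIndependent_and_span
    (n r m : ℕ) (hn : 1 ≤ n) (hr : 1 ≤ r) (hm : 1 ≤ m) (hmn : m ≤ n)
    (ξ : Fin n → K) (hξ : Function.Injective ξ) (c : K) (hc : c ≠ 0)
    (f : K[X]) (hfdef : f = C c * ∏ k : Fin n, (X - C (ξ k)))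
    (a : K[X]) (ha : a.degree < (n : WithBot ℕ))
    (lam : Fin r → K) (ℓ : Fin r → ℕ) (hval : TakesValues a ξ lam ℓ) :
    LinearIndependent K
      (fun p : (Σ i : Fin r, Fin (min (ℓ i) m)) => Ppoly ξ ℓ p.1 ((p.2 : ℕ))) ∧
    ∀ g : MvPolynomial (Fin 2) K, g.degreeOf 0 < m →
      (MvPolynomial.aeval ![(X : K[X]), a] g) % f ∈
        Submodule.span K
          (Set.range fun p : (Σ i : Fin r, Fin (min (ℓ i) m)) =>
            Ppoly ξ ℓ p.1 ((p.2 : ℕ))) :=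
  Ppoly_linearIndependent_and_span_general n r m ξ hξ c hc f hfdef a lam ℓ hval
end
end

section
/- Let K be a field of characteristic p ≥ 0, let e ∈ ℕ with e = 0 whenever p = 0, and write q = p^e (with q = 1 when e = 0). Let h ∈ K[θ] be monic, separable, of degree d ≥ 1, let L = K[θ]/⟨h⟩ with θ̄ the class of θ, and let ℓ ≥ 1. Let Ā = Σ_i A_i·z^i ∈ L[z] (with A_i ∈ L), and let M = L[z]/⟨(z^q − θ̄)^ℓ⟩, which is a free L-module of rank ℓ·q with basis the classes of 1, z, …, z^{ℓq−1}. Then the characteristic polynomial (in the variable y) of the L-linear endomorphism of M given by multiplication by the class of Ā equals (y^q − ᾱ)^ℓ ∈ L[y], where ᾱ = Σ_i A_i^q·θ̄^i ∈ L. -/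
/-!
Write `q = r^e` with `r` the exponential characteristic and `a` for the class of `Ā`. Frobenius
gives `Ā^q ≡ ᾱ (mod z^q − θ̄)`, so `(a^q − ᾱ)^ℓ = 0` in `M` and the matrix of multiplication by `a`
is annihilated by `(y^q − ᾱ)^ℓ`. Since `h` is separable, `L` is reduced, so it suffices to compare
the two characteristic polynomials over an algebraic closure of every residue field of `L`. There
`ᾱ = β^q` and `(y^q − ᾱ)^ℓ = (y − β)^(qℓ)`, so the matrix minus `β` is nilpotent: its
characteristic polynomial is `(y − β)^(qℓ)`.
-/

open Polynomial

noncomputable section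

/-- The power basis `1, z, …, z^(ℓq−1)` of `M = L[z]/⟨(z^q − θ)^ℓ⟩` over `L`. -/
def insepPowerBasis {L : Type*} [CommRing L] (θ : L) (q ℓ : ℕ) (hq : q ≠ 0) :
    PowerBasis L (AdjoinRoot ((X ^ q - C θ) ^ ℓ)) :=
  AdjoinRoot.powerBasis' ((monic_X_pow_sub_C θ hq).pow ℓ)

theorem insepPowerBasis_dim {L : Type*} [CommRing L] [Nontrivial L] (θ : L) (q ℓ : ℕ)
    (hq : q ≠ 0) : (insepPowerBasis θ q ℓ hq).dim = q * ℓ := by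
  simp [insepPowerBasis, (monic_X_pow_sub_C θ hq).natDegree_pow, mul_comm]

instance Polynomial.isReduced {R : Type*} [CommRing R] [IsReduced R] : IsReduced R[X] :=
  ⟨fun _ hP => ext fun i => (Polynomial.isNilpotent_iff.mp hP i).eq_zero⟩

theorem Polynomial.eq_of_forall_map_algebraicClosure_residueField {R : Type*} [CommRing R]
    [IsReduced R] {f g : R[X]}
    (h : ∀ (J : Ideal R) [J.IsPrime], f.map (algebraMap R (AlgebraicClosure J.ResidueField)) =
      g.map (algebraMap R (AlgebraicClosure J.ResidueField))) : f = g := by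
  ext k
  rw [← sub_eq_zero]
  refine (nilpotent_iff_mem_prime.mpr fun J _ => ?_).eq_zero
  rw [← Ideal.algebraMap_residueField_eq_zero]
  apply (algebraMap J.ResidueField (AlgebraicClosure J.ResidueField)).injective
  rw [map_zero, ← IsScalarTower.algebraMap_apply, map_sub, ← coeff_map, ← coeff_map, h J,
    sub_self]

theorem Polynomial.X_pow_sub_C_dvd_pow_sub_C_sum {R : Type*} [CommRing R] {r : ℕ} [ExpChar R r]
    (e : ℕ) (A : R[X]) (θ : R) :
    X ^ r ^ e - C θ ∣ A ^ r ^ e - C (A.sum fun i c => c ^ r ^ e * θ ^ i) := by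
  set g := A.map (iterateFrobenius R r e)
  have hA : A ^ r ^ e = expand R (r ^ e) g := by
    rw [← map_iterateFrobenius_expand, map_expand]
  have hg : g.eval θ = A.sum fun i c => c ^ r ^ e * θ ^ i := by
    simp [g, eval_map, eval₂_eq_sum, iterateFrobenius_def]
  rw [hA, ← hg]
  simpa using _root_.map_dvd (expand R (r ^ e)) (X_sub_C_dvd_sub_C_eval (p := g) (a := θ))

theorem AdjoinRoot.mk_pow_sub_algebraMap_pow_eq_zero {L : Type*} [CommRing L] {r : ℕ}
    [ExpChar L r] (e ℓ : ℕ) (A : L[X]) (θ : L) :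
    (mk ((X ^ r ^ e - C θ) ^ ℓ) A ^ r ^ e -
      algebraMap L _ (A.sum fun i c => c ^ r ^ e * θ ^ i)) ^ ℓ = 0 := by
  rw [algebraMap_eq, ← mk_C, ← map_pow, ← map_sub, ← map_pow, mk_eq_zero]
  exact pow_dvd_pow_of_dvd (X_pow_sub_C_dvd_pow_sub_C_sum e A θ) ℓ

namespace Matrix

variable {R n : Type*} [CommRing R] [IsReduced R] [Fintype n] [DecidableEq n]

theorem charpoly_eq_X_sub_C_pow_of_isNilpotent_sub_scalar {M : Matrix n n R} {μ : R}
    (hM : IsNilpotent (M - scalar n μ)) : M.charpoly = (X - C μ) ^ Fintype.card n := by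
  have hN : (M - scalar n μ).charpoly = X ^ Fintype.card n :=
    sub_eq_zero.mp (isNilpotent_charpoly_sub_pow_of_isNilpotent hM).eq_zero
  rw [charpoly_sub_scalar] at hN
  calc M.charpoly = (M.charpoly.comp (X + C μ)).comp (X - C μ) := by simp [comp_assoc]
    _ = (X - C μ) ^ Fintype.card n := by rw [hN, pow_comp, X_comp]

theorem charpoly_eq_X_pow_sub_C_pow_of_pow_eq {r : ℕ} [ExpChar R r] {e ℓ : ℕ}
    {M : Matrix n n R} {α β : R} (hβ : β ^ r ^ e = α)
    (hM : (M ^ r ^ e - scalar n α) ^ ℓ = 0) (hn : Fintype.card n = r ^ e * ℓ) :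
    M.charpoly = (X ^ r ^ e - C α) ^ ℓ := by
  have hX : (X ^ r ^ e - C α : R[X]) ^ ℓ = (X - C β) ^ Fintype.card n := by
    rw [hn, pow_mul, sub_pow_expChar_pow, ← C_pow, hβ]
  have hscalar : ∀ c, algebraMap R (Matrix n n R) c = scalar n c := fun _ => rfl
  have hMβ : (M - scalar n β) ^ Fintype.card n = 0 :=
    calc (M - scalar n β) ^ Fintype.card n = aeval M ((X - C β) ^ Fintype.card n) := by
          simp [hscalar]
      _ = (M ^ r ^ e - scalar n α) ^ ℓ := by rw [← hX]; simp [hscalar]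
      _ = 0 := hM
  rw [hX]
  exact charpoly_eq_X_sub_C_pow_of_isNilpotent_sub_scalar ⟨_, hMβ⟩

theorem charpoly_eq_X_pow_sub_C_pow_of_pow_sub_scalar_pow_eq_zero {K : Type*} [Field K]
    [Algebra K R] {r : ℕ} [ExpChar K r] {e ℓ : ℕ} {M : Matrix n n R} {α : R}
    (hM : (M ^ r ^ e - scalar n α) ^ ℓ = 0) (hn : Fintype.card n = r ^ e * ℓ) :
    M.charpoly = (X ^ r ^ e - C α) ^ ℓ := by
  refine Polynomial.eq_of_forall_map_algebraicClosure_residueField fun J _ => ?_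
  set φ := algebraMap R (AlgebraicClosure J.ResidueField)
  have : ExpChar (AlgebraicClosure J.ResidueField) r :=
    expChar_of_injective_ringHom (φ.comp (algebraMap K R)).injective r
  obtain ⟨β, hβ⟩ :=
    IsAlgClosed.exists_pow_nat_eq (φ α) (expChar_pow_pos (AlgebraicClosure J.ResidueField) r e)
  have hMφ : (M.map φ ^ r ^ e - scalar n (φ α)) ^ ℓ = 0 := by
    simpa [Matrix.map_pow, Matrix.map_sub, scalar_apply, diagonal_map] using
      congrArg φ.mapMatrix hM
  simpa [charpoly_map] using charpoly_eq_X_pow_sub_C_pow_of_pow_eq hβ hMφ hn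

end Matrix

theorem charpoly_leftMulMatrix_insepPowerBasis {K L : Type*} [Field K] [CommRing L] [Nontrivial L]
    [IsReduced L] [Algebra K L] {r : ℕ} [ExpChar K r] (e ℓ : ℕ) (θ : L) (A : L[X])
    (hq : r ^ e ≠ 0) :
    (Algebra.leftMulMatrix (insepPowerBasis θ (r ^ e) ℓ hq).basis
        (AdjoinRoot.mk ((X ^ r ^ e - C θ) ^ ℓ) A)).charpoly =
      (X ^ r ^ e - C (A.sum fun i c => c ^ r ^ e * θ ^ i)) ^ ℓ := by
  have : ExpChar L r := expChar_of_injective_algebraMap (algebraMap K L).injective r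
  refine Matrix.charpoly_eq_X_pow_sub_C_pow_of_pow_sub_scalar_pow_eq_zero (K := K) ?_ ?_
  · have := congrArg (Algebra.leftMulMatrix (insepPowerBasis θ (r ^ e) ℓ hq).basis)
      (AdjoinRoot.mk_pow_sub_algebraMap_pow_eq_zero e ℓ A θ)
    rwa [map_pow, map_sub, map_pow, AlgHom.commutes, map_zero] at this
  · simp [insepPowerBasis_dim]

/-- the characteristic polynomial of multiplication by `Ā = Σ A_i z^i` on
`M = L[z]/⟨(z^q − θ̄)^ℓ⟩`, where `L = K[θ]/⟨h⟩` with `h` monic separable, equals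
`(y^q − ᾱ)^ℓ` with `ᾱ = Σ A_i^q θ̄^i`. -/
theorem charpoly_mul_inseparable
    (K : Type*) [Field K] (p e ℓ : ℕ) [CharP K p]
    (hp0 : p = 0 → e = 0)
    (h : K[X]) (hsep : h.Separable)
    (Abar : Polynomial (AdjoinRoot h)) :
    have hq : p ^ e ≠ 0 := by
      rcases eq_or_ne p 0 with hp | hp
      · simp [hp, hp0 hp]
      · exact pow_ne_zero _ hp
    Matrix.charpoly
      (LinearMap.toMatrix
        (insepPowerBasis (AdjoinRoot.root h) (p ^ e) ℓ hq).basis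
        (insepPowerBasis (AdjoinRoot.root h) (p ^ e) ℓ hq).basis
        (LinearMap.mulLeft (AdjoinRoot h)
          (AdjoinRoot.mk ((X ^ (p ^ e) - C (AdjoinRoot.root h)) ^ ℓ) Abar)))
      = (X ^ (p ^ e) - C (Abar.sum fun i c => c ^ (p ^ e) * AdjoinRoot.root h ^ i)) ^ ℓ := by
  obtain ⟨r, hr⟩ := ExpChar.exists K
  have hpr : p ^ e = r ^ e := by
    rcases CharP.char_is_prime_or_zero K p with hp | hp
    · rw [ExpChar.eq hr (ExpChar.prime hp)]
    · simp [hp0 hp]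
  rcases subsingleton_or_nontrivial (AdjoinRoot h) with hL | hL
  · exact Subsingleton.elim _ _
  have : IsReduced (AdjoinRoot h) :=
    (Ideal.isRadical_iff_quotient_reduced _).mp
      (isRadical_iff_span_singleton.mp hsep.squarefree.isRadical)
  intro hq
  clear_value hq
  revert hq
  rw [hpr]
  exact charpoly_leftMulMatrix_insepPowerBasis (K := K) e ℓ _ Abar
end
end

section
/- Let K be a field of characteristic p ≥ 0, let e ∈ ℕ with e = 0 whenever p = 0, write q = p^e (with q = 1 when e = 0), let ℓ ≥ 1, and let h ∈ K[x] be monic of degree d ≥ 1. Set f = h(x^q)^ℓ ∈ K[x], which is monic of degree n = d·ℓ·q, and let B = K[θ,z]/⟨h(θ), (z^q − θ)^ℓ⟩. Then there exists a K-algебra homomorphism Ψ : K[x]/⟨f⟩ → B sending the class of x to the class of z. If moreover h is separable, then the minimal polynomial over K of the class of z in B equals f, and Ψ is an isomorphism of K-algebras. -/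
open Polynomial

noncomputable section

variable (K : Type*) [Field K]

/-- The ideal `⟨h(θ), (z^q − θ)^ℓ⟩` of `K[θ,z]`, where `θ = X 0` and `z = X 1`. -/
abbrev tangleIdeal (q ℓ : ℕ) (h : K[X]) : Ideal (MvPolynomial (Fin 2) K) :=
  Ideal.span {Polynomial.aeval (MvPolynomial.X 0) h,
    (MvPolynomial.X 1 ^ q - MvPolynomial.X 0) ^ ℓ}

/-- The `K`-algebra `B = K[θ,z]/⟨h(θ), (z^q − θ)^ℓ⟩`. -/
abbrev tangleAlgebra (q ℓ : ℕ) (h : K[X]) : Type _ :=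
  MvPolynomial (Fin 2) K ⧸ tangleIdeal K q ℓ h

/-! In `B` the class of `z` is a root of `f`, because `h(z^q) = h(z^q) - h(θ)` is divisible
by `z^q - θ`; this gives `Ψ`. For the inverse, put `a = x^q` in `K[x]/⟨f⟩`. Then `h(a)^ℓ = 0`,
and separability makes `h'(a)` a unit, so Newton's iteration produces a root `s` of `h` with
`a - s` nilpotent. As `h(a)` is `a - s` times a unit, even `(a - s)^ℓ = 0`, so `θ ↦ s, z ↦ x`
defines a map `B → K[x]/⟨f⟩`. It inverts `Ψ` because a separable polynomial has at most one root
in each nilpotent neighbourhood, which forces `Ψ(s) = θ`. The minimal polynomial of `z` is then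
that of `x`, i.e. `f`. -/

namespace Polynomial

section Hensel

variable {R S : Type*} [CommRing R] [CommRing S] [Algebra R S] {P : R[X]}

theorem Separable.isUnit_aeval_derivative (hP : P.Separable) {y : S}
    (hy : IsNilpotent (aeval y P)) : IsUnit (aeval y (derivative P)) := by
  obtain ⟨a, b, hab⟩ := hP
  have hbezout : aeval y b * aeval y (derivative P) = 1 - aeval y a * aeval y P := by
    have := congrArg (aeval y) hab
    simp only [map_add, map_mul, map_one] at this
    linear_combination this
  refine isUnit_of_mul_isUnit_right (x := aeval y b) ?_
  rw [hbezout]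
  exact ((Commute.all _ _).isNilpotent_mul_left hy).isUnit_one_sub

theorem aeval_dvd_sub_of_aeval_eq_zero {a s : S} (hs : aeval s P = 0)
    (hs' : IsUnit (aeval s (derivative P))) (has : IsNilpotent (a - s)) :
    aeval a P ∣ a - s := by
  obtain ⟨k, hk⟩ := (P.map (algebraMap R S)).binomExpansion s (a - s)
  simp only [add_sub_cancel, eval_map_algebraMap, derivative_map] at hk
  have hunit : IsUnit (aeval s (derivative P) + k * (a - s)) :=
    ((Commute.all k _).isNilpotent_mul_left has).isUnit_add_left_of_commute hs'
      (Commute.all _ _)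
  have hfactor : aeval a P = (a - s) * (aeval s (derivative P) + k * (a - s)) := by
    rw [hk, hs]
    ring
  refine ⟨↑hunit.unit⁻¹, ?_⟩
  rw [hfactor, mul_assoc, hunit.mul_val_inv, mul_one]

theorem Separable.exists_aeval_eq_zero_of_aeval_pow_eq_zero (hP : P.Separable) {a : S} {ℓ : ℕ}
    (ha : aeval a P ^ ℓ = 0) : ∃ s, aeval s P = 0 ∧ (a - s) ^ ℓ = 0 := by
  have hnil : IsNilpotent (aeval a P) := ⟨ℓ, ha⟩
  obtain ⟨s, ⟨has, hs⟩, -⟩ :=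
    existsUnique_nilpotent_sub_and_aeval_eq_zero hnil (hP.isUnit_aeval_derivative hnil)
  have hdvd := aeval_dvd_sub_of_aeval_eq_zero hs
    (hP.isUnit_aeval_derivative (hs ▸ IsNilpotent.zero)) has
  exact ⟨s, hs, zero_dvd_iff.mp (ha ▸ pow_dvd_pow_of_dvd hdvd ℓ)⟩

theorem Separable.eq_of_isNilpotent_sub (hP : P.Separable) {r₁ r₂ : S} (h₁ : aeval r₁ P = 0)
    (h₂ : aeval r₂ P = 0) (hn : IsNilpotent (r₁ - r₂)) : r₁ = r₂ := by
  have hnil : IsNilpotent (aeval r₁ P) := h₁ ▸ IsNilpotent.zero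
  exact (existsUnique_nilpotent_sub_and_aeval_eq_zero hnil
    (hP.isUnit_aeval_derivative hnil)).unique ⟨by simp, h₁⟩ ⟨hn, h₂⟩

end Hensel

theorem aeval_comp_X_pow_pow_eq_zero {R S : Type*} [CommRing R] [CommRing S] [Algebra R S]
    {P : R[X]} {q ℓ : ℕ} {t w : S} (ht : aeval t P = 0) (hw : (w ^ q - t) ^ ℓ = 0) :
    aeval w (P.comp (X ^ q) ^ ℓ) = 0 := by
  obtain ⟨c, hc⟩ := sub_dvd_eval_sub (w ^ q) t (P.map (algebraMap R S))
  simp only [eval_map_algebraMap, ht, sub_zero] at hc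
  rw [map_pow, aeval_comp, map_pow, aeval_X, hc, mul_pow, hw, zero_mul]

end Polynomial

namespace tangleAlgebra

variable {K} {q ℓ : ℕ} {h : K[X]}

local notation "θ" => Ideal.Quotient.mk (tangleIdeal K q ℓ h) (MvPolynomial.X 0)
local notation "z" => Ideal.Quotient.mk (tangleIdeal K q ℓ h) (MvPolynomial.X 1)

theorem aeval_theta : aeval θ h = 0 := by
  rw [← Ideal.Quotient.mkₐ_eq_mk K, aeval_algHom_apply, Ideal.Quotient.mkₐ_eq_mk,
    Ideal.Quotient.eq_zero_iff_mem]
  exact Ideal.subset_span (Set.mem_insert _ _)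

theorem z_pow_sub_theta_pow : (z ^ q - θ) ^ ℓ = 0 := by
  rw [← map_pow, ← map_sub, ← map_pow, Ideal.Quotient.eq_zero_iff_mem]
  exact Ideal.subset_span (Set.mem_insert_of_mem _ rfl)

theorem algHom_ext {S : Type*} [CommRing S] [Algebra K S]
    {φ ψ : tangleAlgebra K q ℓ h →ₐ[K] S}
    (hθ : φ θ = ψ θ) (hz : φ z = ψ z) : φ = ψ := by
  refine Ideal.Quotient.algHom_ext K (MvPolynomial.algHom_ext fun i => ?_)
  fin_cases i
  exacts [hθ, hz]

section lift

variable {S : Type*} [CommRing S] [Algebra K S] (s y : S) (hs : aeval s h = 0)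
  (hy : (y ^ q - s) ^ ℓ = 0)

def lift : tangleAlgebra K q ℓ h →ₐ[K] S :=
  Ideal.Quotient.liftₐ _ (MvPolynomial.aeval ![s, y]) fun a ha => RingHom.mem_ker.mp <| by
    refine (Ideal.span_le (I := RingHom.ker (MvPolynomial.aeval ![s, y]))).mpr ?_ ha
    rintro g (rfl | rfl)
    · simp [← aeval_algHom_apply, hs]
    · simp [hy]

@[simp]
theorem lift_theta : lift s y hs hy θ = s := by
  change ((lift s y hs hy).comp (Ideal.Quotient.mkₐ K _)) (MvPolynomial.X 0) = s
  rw [lift, Ideal.Quotient.liftₐ_comp]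
  simp

@[simp]
theorem lift_z : lift s y hs hy z = y := by
  change ((lift s y hs hy).comp (Ideal.Quotient.mkₐ K _)) (MvPolynomial.X 1) = y
  rw [lift, Ideal.Quotient.liftₐ_comp]
  simp

end lift

def ofAdjoinRoot : AdjoinRoot (h.comp (X ^ q) ^ ℓ) →ₐ[K] tangleAlgebra K q ℓ h :=
  AdjoinRoot.liftAlgHom _ (Algebra.ofId _ _) z
    (aeval_comp_X_pow_pow_eq_zero aeval_theta z_pow_sub_theta_pow)

@[simp]
theorem ofAdjoinRoot_root : ofAdjoinRoot (AdjoinRoot.root (h.comp (X ^ q) ^ ℓ)) = z :=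
  AdjoinRoot.liftAlgHom_root ..

theorem ofAdjoinRoot_bijective (hsep : h.Separable) :
    Function.Bijective (ofAdjoinRoot : AdjoinRoot (h.comp (X ^ q) ^ ℓ) →ₐ[K] _) := by
  set x := AdjoinRoot.root (h.comp (X ^ q) ^ ℓ)
  have hx : aeval (x ^ q) h ^ ℓ = 0 := by
    have hroot := AdjoinRoot.aeval_eq (f := h.comp (X ^ q) ^ ℓ) (h.comp (X ^ q) ^ ℓ)
    rwa [AdjoinRoot.mk_self, map_pow, aeval_comp, map_pow, aeval_X] at hroot
  obtain ⟨s, hs, hxs⟩ := hsep.exists_aeval_eq_zero_of_aeval_pow_eq_zero hx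
  let Φ := lift s x hs hxs
  have hΦΨ : Φ.comp ofAdjoinRoot = AlgHom.id K _ := AdjoinRoot.algHom_ext (by simp [Φ, x])
  have hzs : IsNilpotent (z ^ q - ofAdjoinRoot s) :=
    ⟨ℓ, by rw [← ofAdjoinRoot_root, ← map_pow, ← map_sub, ← map_pow, hxs, map_zero]⟩
  have hΨs : ofAdjoinRoot s = θ := by
    refine hsep.eq_of_isNilpotent_sub (by rw [aeval_algHom_apply, hs, map_zero]) aeval_theta ?_
    rw [← sub_sub_sub_cancel_left _ _ (z ^ q)]
    exact (Commute.all _ _).isNilpotent_sub ⟨ℓ, z_pow_sub_theta_pow⟩ hzs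
  have hΨΦ : ofAdjoinRoot.comp Φ = AlgHom.id K _ :=
    algHom_ext (by simp [Φ, hΨs]) (by simp [Φ, x])
  exact (AlgEquiv.ofAlgHom _ _ hΨΦ hΦΨ).bijective

end tangleAlgebra

theorem untangling
    (p e ℓ d : ℕ) (hp0 : p = 0 → e = 0)
    (h : K[X]) (hmon : h.Monic) (hdeg : h.natDegree = d) :
    (h.comp (X ^ p ^ e) ^ ℓ).Monic ∧
    (h.comp (X ^ p ^ e) ^ ℓ).natDegree = d * ℓ * p ^ e ∧
    (∃ Ψ : AdjoinRoot (h.comp (X ^ p ^ e) ^ ℓ) →ₐ[K] tangleAlgebra K (p ^ e) ℓ h,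
      Ψ (AdjoinRoot.root _) = Ideal.Quotient.mk (tangleIdeal K (p ^ e) ℓ h) (MvPolynomial.X 1)) ∧
    (h.Separable →
      minpoly K (Ideal.Quotient.mk (tangleIdeal K (p ^ e) ℓ h) (MvPolynomial.X 1))
          = h.comp (X ^ p ^ e) ^ ℓ ∧
        ∃ Ψ : AdjoinRoot (h.comp (X ^ p ^ e) ^ ℓ) ≃ₐ[K] tangleAlgebra K (p ^ e) ℓ h,
          Ψ (AdjoinRoot.root _)
            = Ideal.Quotient.mk (tangleIdeal K (p ^ e) ℓ h) (MvPolynomial.X 1)) := by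
  have hq : p ^ e ≠ 0 := by
    rcases eq_or_ne p 0 with rfl | hp
    · simp [hp0 rfl]
    · exact pow_ne_zero e hp
  have hf : (h.comp (X ^ p ^ e) ^ ℓ).Monic :=
    (hmon.comp (monic_X_pow _) (by simpa using hq)).pow ℓ
  refine ⟨hf, by rw [natDegree_pow, natDegree_comp, natDegree_X_pow, hdeg]; ring,
    ⟨_, tangleAlgebra.ofAdjoinRoot_root⟩, fun hsep => ?_⟩
  let Ψ : AdjoinRoot (h.comp (X ^ p ^ e) ^ ℓ) ≃ₐ[K] tangleAlgebra K (p ^ e) ℓ h :=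
    AlgEquiv.ofBijective _ (tangleAlgebra.ofAdjoinRoot_bijective hsep)
  have hΨ : Ψ (AdjoinRoot.root _) = _ := tangleAlgebra.ofAdjoinRoot_root
  refine ⟨?_, Ψ, hΨ⟩
  rw [← hΨ, minpoly.algEquiv_eq, AdjoinRoot.minpoly_root hf.ne_zero, hf.leadingCoeff, inv_one,
    map_one, mul_one]
end
end
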